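/- arXiv:1308.6497 — 12 statements merged into one kernel-verified Lean document; each statement's English description precedes it below -/
import Mathlib

section
/- Let π be a group and ε : π → ℤ a surjective homomorphism whose kernel is finitely generated. Suppose f : π ≅ HNN(A,B,B',φ) is a splitting of (π, ε) over B with base A. Then B = A and B' = A (that is, both associated subgroups equal the whole base group); in particular φ is an automorphism of A, and f⁻¹ maps the image of the base group A in the HNN extension onto ker ε. -/
/-!
Read the exponents `±1` of the stable letter in a reduced word as the steps of a walk on `ℤ`
starting at `0`; by the normal form theorem all reduced words for an element have the same
walk. Multiplying a normal word by `t^{±1}` either prepends a step or cancels the first one, so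
an element of `ker ε₀` whose own walk stays in `[-N, N]` maps normal words with walks in
`[-N, N]` to normal words with the same property. If `ker ε₀` is finitely generated, one `N`
works for the generators and their inverses, hence for the whole kernel. But if `a` lies outside
an associated subgroup, say `a ∉ B`, then `(t a)^{N+1} t^{-(N+1)}` is a reduced word in the
kernel whose walk reaches `N + 1`. Once `B = B' = A`, every reduced word has a constant walk,
so the only elements of the kernel are those of the base group.
-/

/-- The canonical epimorphism `ε₀ : HNN(A,B,B',φ) → ℤ` sending each element of the base
group to `0` and the stable letter `t` to `1`. -/
def canonicalEps {A : Type} [Group A] (B B' : Subgroup A) (φ : B ≃* B') :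
    HNNExtension A B B' φ →* Multiplicative ℤ :=
  HNNExtension.lift 1 (Multiplicative.ofAdd 1) (fun _ => by simp)

/-- The walk on `ℤ` that starts at `0` and takes the steps `l` never leaves `[a, b]`. -/
def WalkWithin : List ℤˣ → ℤ → ℤ → Prop
  | [], a, b => a ≤ 0 ∧ 0 ≤ b
  | u :: l, a, b => a ≤ 0 ∧ 0 ≤ b ∧ WalkWithin l (a - u) (b - u)

namespace WalkWithin

lemma zero_mem_Icc {l : List ℤˣ} {a b : ℤ} (h : WalkWithin l a b) : 0 ∈ Set.Icc a b := by
  cases l with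
  | nil => exact h
  | cons u l => exact ⟨h.1, h.2.1⟩

lemma mono {l : List ℤˣ} {a b a' b' : ℤ} (h : WalkWithin l a b) (ha : a' ≤ a)
    (hb : b ≤ b') : WalkWithin l a' b' := by
  induction l generalizing a b a' b' with
  | nil => exact ⟨ha.trans h.1, h.2.trans hb⟩
  | cons u l ih => exact ⟨ha.trans h.1, h.2.1.trans hb, ih h.2.2 (by omega) (by omega)⟩

lemma neg_length_length (l : List ℤˣ) : WalkWithin l (-l.length) l.length := by
  induction l with
  | nil => exact ⟨le_rfl, le_rfl⟩
  | cons u l ih =>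
    have hu : (u : ℤ) = 1 ∨ (u : ℤ) = -1 := by
      rcases Int.units_eq_one_or u with rfl | rfl <;> simp
    refine ⟨by simp, by positivity, ih.mono ?_ ?_⟩ <;> simp only [List.length_cons] <;>
      push_cast <;> omega

lemma sum_mem_Icc_of_append {l₁ l₂ : List ℤˣ} {a b : ℤ}
    (h : WalkWithin (l₁ ++ l₂) a b) : (l₁.map Units.val).sum ∈ Set.Icc a b := by
  induction l₁ generalizing a b with
  | nil => exact h.zero_mem_Icc
  | cons u l ih =>
    have := ih h.2.2
    simp only [List.map_cons, List.sum_cons, Set.mem_Icc] at this ⊢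
    omega

end WalkWithin

open HNNExtension HNNExtension.NormalWord

namespace HNNExtension.NormalWord

variable {G : Type*} [Group G] {A B : Subgroup G} {φ : A ≃* B} {d : TransversalPair G A B}

def ReducedWord.pattern (w : ReducedWord G A B) : List ℤˣ := w.toList.map Prod.fst

lemma pattern_t_zpow_smul (u : ℤˣ) (w : NormalWord d) :
    ((t : HNNExtension G A B φ) ^ (u : ℤ) • w).pattern = u :: w.pattern ∨
      w.pattern = -u :: ((t : HNNExtension G A B φ) ^ (u : ℤ) • w).pattern := by
  rw [t_pow_smul_eq_unitsSMul, unitsSMul]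
  split_ifs with hcan
  · right
    cases w using consRecOn with
    | ofGroup => simp [Cancels] at hcan
    | cons _ u' _ _ _ =>
      obtain rfl : u' = -u := by simpa [Cancels] using hcan.2
      simp [unitsSMulWithCancel, ReducedWord.pattern]
  · left
    simp [ReducedWord.pattern]

lemma walkWithin_t_zpow_smul {u : ℤˣ} {w : NormalWord d} {a b : ℤ} (hab : 0 ∈ Set.Icc a b)
    (hw : WalkWithin w.pattern (a - u) (b - u)) :
    WalkWithin ((t : HNNExtension G A B φ) ^ (u : ℤ) • w).pattern a b := by
  rcases pattern_t_zpow_smul u w with h | h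
  · rw [h]
    exact ⟨hab.1, hab.2, hw⟩
  · rw [h] at hw
    simpa using hw.2.2

lemma walkWithin_listProd_smul (l : List (ℤˣ × G)) {w : NormalWord d} {a b : ℤ}
    (hl : WalkWithin (l.map Prod.fst) a b)
    (hw : WalkWithin w.pattern (a - ((l.map Prod.fst).map Units.val).sum)
      (b - ((l.map Prod.fst).map Units.val).sum)) :
    WalkWithin ((l.map fun x : ℤˣ × G =>
      (t ^ (x.1 : ℤ) * of x.2 : HNNExtension G A B φ)).prod • w).pattern a b := by
  induction l generalizing a b with
  | nil => simpa using hw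
  | cons x l ih =>
    rw [List.map_cons, List.prod_cons, mul_smul, mul_smul, of_smul_eq_smul]
    exact walkWithin_t_zpow_smul hl.zero_mem_Icc (ih hl.2.2 (by simpa [sub_sub] using hw))

lemma walkWithin_prod_smul {v w : NormalWord d} {a b : ℤ} (hv : WalkWithin v.pattern a b)
    (hw : WalkWithin w.pattern (a - (v.pattern.map Units.val).sum)
      (b - (v.pattern.map Units.val).sum)) :
    WalkWithin ((v.prod φ) • w).pattern a b := by
  rw [ReducedWord.prod, mul_smul, of_smul_eq_smul]
  exact walkWithin_listProd_smul _ hv hw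

lemma pattern_prod_smul_empty (w : ReducedWord G A B) :
    ((w.prod φ) • (empty : NormalWord d)).pattern = w.pattern :=
  (ReducedWord.map_fst_eq_and_of_prod_eq φ (by simp)).1

lemma exists_reducedWord_pattern_eq {u : ℤˣ} {a : G} (ha : a ∉ toSubgroup A B u) (n : ℕ) :
    ∃ w : ReducedWord G A B, w.pattern = .replicate n u ++ .replicate n (-u) := by
  refine ⟨⟨1, .replicate n (u, a) ++ .replicate n (-u, 1), ?_⟩,
    by simp [ReducedWord.pattern]⟩
  refine List.isChain_append.2 ⟨List.isChain_replicate_of_rel _ fun _ => rfl,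
    List.isChain_replicate_of_rel _ fun _ => rfl, fun x hx _ _ hmem => ?_⟩
  obtain rfl := List.eq_of_mem_replicate (List.mem_of_mem_getLast? hx)
  exact absurd hmem ha

lemma ReducedWord.pattern_eq_replicate (htop : ∀ u, toSubgroup A B u = ⊤)
    (w : ReducedWord G A B) :
    ∀ u ∈ w.pattern.head?, w.pattern = .replicate w.pattern.length u :=
  List.isChain_eq_iff_eq_replicate.1 <| List.isChain_map_of_isChain _
    (fun x _ h => h (htop x.1 ▸ Subgroup.mem_top x.2)) w.chain

end HNNExtension.NormalWord

section CanonicalEps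

variable {G : Type} [Group G] {A B : Subgroup G} {φ : A ≃* B}

@[simp] lemma canonicalEps_of (g : G) : canonicalEps A B φ (of g) = 1 := lift_of ..

@[simp] lemma canonicalEps_t : canonicalEps A B φ t = Multiplicative.ofAdd 1 := lift_t ..

lemma canonicalEps_listProd (l : List (ℤˣ × G)) :
    canonicalEps A B φ (l.map fun x : ℤˣ × G =>
      (t ^ (x.1 : ℤ) * of x.2 : HNNExtension G A B φ)).prod =
        Multiplicative.ofAdd ((l.map Prod.fst).map Units.val).sum := by
  induction l with
  | nil => simp
  | cons x l ih =>
    rw [List.map_cons, List.prod_cons, map_mul, map_mul, map_zpow, canonicalEps_t,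
      canonicalEps_of, ih, ← ofAdd_zsmul]
    simp [ofAdd_add]

lemma canonicalEps_prod (w : ReducedWord G A B) :
    canonicalEps A B φ (w.prod φ) = Multiplicative.ofAdd (w.pattern.map Units.val).sum := by
  simp [ReducedWord.prod, canonicalEps_listProd, ReducedWord.pattern]

end CanonicalEps

namespace HNNExtension

variable {G : Type} [Group G] {A B : Subgroup G} {φ : A ≃* B}

lemma walkWithin_smul_of_mem_ker {d : TransversalPair G A B} {x : HNNExtension G A B φ}
    (hx : x ∈ (canonicalEps A B φ).ker) {N : ℕ}
    (hxN : (x • (empty : NormalWord d)).pattern.length ≤ N) {w : NormalWord d}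
    (hw : WalkWithin w.pattern (-N) N) : WalkWithin (x • w).pattern (-N) N := by
  set v := x • (empty : NormalWord d)
  have hvx : v.prod φ = x := by simp [v]
  have hsum : (v.pattern.map Units.val).sum = 0 := by
    rwa [MonoidHom.mem_ker, ← hvx, canonicalEps_prod, ofAdd_eq_one] at hx
  rw [← hvx]
  exact walkWithin_prod_smul ((WalkWithin.neg_length_length _).mono (by omega) (by omega))
    (by simpa [hsum] using hw)

lemma exists_forall_mem_ker_walkWithin (d : TransversalPair G A B)
    (hfg : (canonicalEps A B φ).ker.FG) :
    ∃ N : ℕ, ∀ x ∈ (canonicalEps A B φ).ker,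
      WalkWithin (x • (empty : NormalWord d)).pattern (-N) N := by
  obtain ⟨S, hS⟩ := hfg
  let len (x : HNNExtension G A B φ) := (x • (empty : NormalWord d)).pattern.length
  let bound (s : HNNExtension G A B φ) := max (len s) (len s⁻¹)
  set N := S.sup bound
  have hSker (s) (hs : s ∈ S) : s ∈ (canonicalEps A B φ).ker :=
    hS ▸ Subgroup.subset_closure hs
  refine ⟨N, fun x hx => ?_⟩
  suffices ∀ w : NormalWord d, WalkWithin w.pattern (-N) N → WalkWithin (x • w).pattern (-N) N
    from this empty ⟨by simp, by simp⟩
  rw [← hS] at hx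
  induction hx using Subgroup.closure_induction'' with
  | mem s hs =>
    exact fun w => walkWithin_smul_of_mem_ker (hSker s hs)
      ((le_max_left _ _).trans (Finset.le_sup (f := bound) hs))
  | inv_mem s hs =>
    exact fun w => walkWithin_smul_of_mem_ker (inv_mem (hSker s hs))
      ((le_max_right _ _).trans (Finset.le_sup (f := bound) hs))
  | one => simp
  | mul x y _ _ hx hy => exact fun w hw => by rw [mul_smul]; exact hx _ (hy w hw)

theorem toSubgroup_eq_top_of_fg_ker (hfg : Group.FG (canonicalEps A B φ).ker) (u : ℤˣ) :
    toSubgroup A B u = ⊤ := by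
  obtain ⟨d⟩ := TransversalPair.nonempty G A B
  obtain ⟨N, hN⟩ :=
    exists_forall_mem_ker_walkWithin (φ := φ) d ((Group.fg_iff_subgroup_fg _).1 hfg)
  refine (Subgroup.eq_top_iff' _).2 fun a => by_contra fun ha => ?_
  obtain ⟨w, hw⟩ := exists_reducedWord_pattern_eq ha (N + 1)
  have hker : w.prod φ ∈ (canonicalEps A B φ).ker := by
    simp [MonoidHom.mem_ker, canonicalEps_prod, hw]
  have hwalk := hN _ hker
  rw [pattern_prod_smul_empty, hw] at hwalk
  have hbound := hwalk.sum_mem_Icc_of_append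
  rcases Int.units_eq_one_or u with rfl | rfl <;> simp at hbound

theorem range_of_eq_ker_canonicalEps (htop : ∀ u, toSubgroup A B u = ⊤) :
    (of : G →* HNNExtension G A B φ).range = (canonicalEps A B φ).ker := by
  refine le_antisymm (by rintro _ ⟨g, rfl⟩; simp) fun x hx => ?_
  obtain ⟨d⟩ := TransversalPair.nonempty G A B
  set v := x • (empty : NormalWord d)
  have hvx : v.prod φ = x := by simp [v]
  rw [MonoidHom.mem_ker, ← hvx, canonicalEps_prod, ofAdd_eq_one] at hx
  have hnil : v.toList = [] := by
    rcases hpat : v.pattern with _ | ⟨u, l⟩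
    · exact List.map_eq_nil_iff.1 hpat
    · have hrep := v.pattern_eq_replicate htop u (by simp [hpat])
      rw [hpat] at hrep hx
      rw [hrep] at hx
      rcases Int.units_eq_one_or u with rfl | rfl <;> simp at hx <;> omega
  exact ⟨v.head, by rw [← hvx, ReducedWord.prod, hnil]; simp⟩

end HNNExtension

theorem splitting_of_fg_kernel_is_ascending_general
    {π : Type} [Group π] (ε : π →* Multiplicative ℤ)
    (hfg : Group.FG ε.ker)
    {A : Type} [Group A] (B B' : Subgroup A) (φ : B ≃* B')
    (f : π ≃* HNNExtension A B B' φ)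
    (hf : ∀ x : π, ε x = canonicalEps B B' φ (f x)) :
    B = ⊤ ∧ B' = ⊤ ∧
      Subgroup.map f.symm.toMonoidHom
        (HNNExtension.of : A →* HNNExtension A B B' φ).range = ε.ker := by
  have hker : ε.ker.map (f : π →* HNNExtension A B B' φ) = (canonicalEps B B' φ).ker := by
    rw [Subgroup.map_equiv_eq_comap_symm, MonoidHom.comap_ker]
    exact congrArg _ (MonoidHom.ext fun x => by simp [hf])
  have htop := toSubgroup_eq_top_of_fg_ker (φ := φ) <| hker ▸ Group.fg_of_surjective
    (f := (f.subgroupMap ε.ker).toMonoidHom) (f.subgroupMap ε.ker).surjective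
  refine ⟨htop 1, (toSubgroup_neg_one B B').symm.trans (htop (-1)), ?_⟩
  rw [range_of_eq_ker_canonicalEps htop]
  exact (Subgroup.map_symm_eq_iff_map_eq _).2 hker

/-- If `ε : π → ℤ` is surjective with finitely generated kernel and
`f : π ≅ HNN(A,B,B',φ)` is a splitting of `(π, ε)` (i.e. `ε = ε₀ ∘ f`), then `B = A`
and `B' = A`, and `f⁻¹` maps the image of the base group `A` onto `ker ε`. -/
theorem splitting_of_fg_kernel_is_ascending
    {π : Type} [Group π] (ε : π →* Multiplicative ℤ)
    (hsurj : Function.Surjective ε) (hfg : Group.FG ε.ker)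
    {A : Type} [Group A] (B B' : Subgroup A) (φ : B ≃* B')
    (f : π ≃* HNNExtension A B B' φ)
    (hf : ∀ x : π, ε x = canonicalEps B B' φ (f x)) :
    B = ⊤ ∧ B' = ⊤ ∧
      Subgroup.map f.symm.toMonoidHom
        (HNNExtension.of : A →* HNNExtension A B B' φ).range = ε.ker :=
  splitting_of_fg_kernel_is_ascending_general ε hfg B B' φ f hf
end

section
/- Let π be a finitely presented group and ε : π → ℤ a surjective homomorphism. Then there exist a group A, subgroups B, B' ≤ A, an isomorphism φ : B ≃ B', and a splitting f : π ≅ HNN(A,B,B',φ) of (π, ε), such that both A and B are finitely generated. -/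
/-- A splitting of `(π, ε)` : an HNN decomposition of `π` with base group `A` and
amalgamating subgroups `B ≃ B'`, compatible with `ε` (i.e. `ε = ε₀ ∘ f`). -/
structure HNNSplitting (π : Type) [Group π] (ε : π →* Multiplicative ℤ) where
  A : Type
  [instGroupA : Group A]
  B : Subgroup A
  B' : Subgroup A
  φ : B ≃* B'
  f : π ≃* HNNExtension A B B' φ
  compat : ∀ x : π, ε x = canonicalEps B B' φ (f x)

attribute [instance] HNNSplitting.instGroupA

/-!
Pick `t₀ ∈ π` with `ε t₀ = 1` and rewrite the presentation on the generators `t = t₀` and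
`xᵢ ∈ ker ε`. Every relator then has exponent sum zero in `t`, so it is a word in the conjugates
`x_{i,j} = tʲ xᵢ t⁻ʲ`; conjugating by a power of `t`, all relators become words in the `x_{i,j}`
with `0 ≤ j ≤ L` for one `L`. Let `A ≤ π` be generated by those elements and `B ≤ A` by the ones
with `j < L`, so that `t₀ B t₀⁻¹ ≤ A`. The inclusion of `A` and `t ↦ t₀` define
`HNN(A, B, t₀ B t₀⁻¹) → π`. Conversely each relator, being a word in generators of `A` that is
trivial in `π`, is already trivial in `A`; so `π → HNN` is well defined, and it is inverse to the
first map. Building `A` inside `π` is what makes this work: one never has to know which relations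
hold among the `x_{i,j}`.
-/

namespace BieriStrebel

open Subgroup Multiplicative Set

variable {ι : Type}

def t : FreeGroup (Option ι) := FreeGroup.of none

def x (i : ι) : FreeGroup (Option ι) := FreeGroup.of (some i)

@[simp]
theorem of_none : (FreeGroup.of none : FreeGroup (Option ι)) = t := rfl

@[simp]
theorem of_some (i : ι) : FreeGroup.of (some i) = x i := rfl

def xConj (i : ι) (j : ℤ) : FreeGroup (Option ι) := t ^ j * x i * (t ^ j)⁻¹

def degree : FreeGroup (Option ι) →* Multiplicative ℤ :=
  FreeGroup.lift fun o => o.elim (ofAdd 1) fun _ => 1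

def window (J : Set ℤ) : Subgroup (FreeGroup (Option ι)) := closure (image2 xConj univ J)

@[simp]
theorem degree_t : degree (t : FreeGroup (Option ι)) = ofAdd 1 := FreeGroup.lift_apply_of

@[simp]
theorem degree_x (i : ι) : degree (x i) = 1 := FreeGroup.lift_apply_of

theorem xConj_zero (i : ι) : xConj i 0 = x i := by simp [xConj]

theorem xConj_mem_window (i : ι) {J : Set ℤ} {j : ℤ} (hj : j ∈ J) : xConj i j ∈ window J :=
  subset_closure (mem_image2_of_mem (mem_univ i) hj)

theorem window_mono : Monotone (window (ι := ι)) :=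
  fun _ _ h => closure_mono (image2_subset_left h)

theorem conj_zpow_mem_window {J J' : Set ℤ} (k : ℤ) (hJ : ∀ j ∈ J, j + k ∈ J')
    {w : FreeGroup (Option ι)} (hw : w ∈ window J) : t ^ k * w * (t ^ k)⁻¹ ∈ window J' := by
  refine (closure_le (window J' |>.comap (MulAut.conj (t ^ k)).toMonoidHom)).2 ?_ hw
  rintro _ ⟨i, -, j, hj, rfl⟩
  change t ^ k * xConj i j * (t ^ k)⁻¹ ∈ window J'
  convert xConj_mem_window i (hJ j hj) using 1
  simp only [xConj, zpow_add]
  group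

theorem mul_zpow_neg_degree_mem_window (w : FreeGroup (Option ι)) :
    w * t ^ (-toAdd (degree w)) ∈ window univ := by
  have hx (i : ι) : x i ∈ window univ := xConj_zero i ▸ xConj_mem_window i (mem_univ 0)
  induction w using FreeGroup.induction_on with
  | C1 => simp [one_mem]
  | of a => cases a <;> simp [hx, one_mem]
  | inv_of a _ => cases a <;> simp [hx, one_mem]
  | mul w y hw hy =>
    have hconj := conj_zpow_mem_window (toAdd (degree w)) (fun _ _ => mem_univ _) hy
    convert mul_mem hw hconj using 1
    simp only [map_mul, toAdd_mul, neg_add, zpow_add]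
    group

theorem exists_window_Icc_of_mem {w : FreeGroup (Option ι)} (hw : w ∈ window univ) :
    ∃ N : ℕ, w ∈ window (Icc (-N) N) := by
  induction hw using closure_induction with
  | mem w hw =>
    obtain ⟨i, -, j, -, rfl⟩ := hw
    exact ⟨j.natAbs, xConj_mem_window i ⟨by omega, by omega⟩⟩
  | one => exact ⟨0, one_mem _⟩
  | mul w y _ _ hw hy =>
    obtain ⟨N, hN⟩ := hw
    obtain ⟨N', hN'⟩ := hy
    have hmono {n : ℕ} (h : n ≤ max N N') := window_mono (ι := ι)
      (Icc_subset_Icc (neg_le_neg (Nat.cast_le.2 h)) (Nat.cast_le.2 h))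
    exact ⟨max N N', mul_mem (hmono (le_max_left _ _) hN) (hmono (le_max_right _ _) hN')⟩
  | inv w _ hw =>
    obtain ⟨N, hN⟩ := hw
    exact ⟨N, inv_mem hN⟩

theorem exists_window_Icc_of_finite {R : Set (FreeGroup (Option ι))} (hR : R.Finite)
    (hdeg : ∀ w ∈ R, degree w = 1) : ∃ N : ℕ, ∀ w ∈ R, w ∈ window (Icc (-N : ℤ) N) := by
  have hmem {w} (hw : w ∈ R) : w ∈ window univ := by
    simpa [hdeg w hw] using mul_zpow_neg_degree_mem_window w
  choose! N hN using fun w (hw : w ∈ R) => exists_window_Icc_of_mem (hmem hw)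
  obtain ⟨M, hM⟩ := (hR.image N).bddAbove
  refine ⟨M, fun w hw => window_mono ?_ (hN w hw)⟩
  have : (N w : ℤ) ≤ M := Nat.cast_le.2 (hM ⟨w, hw, rfl⟩)
  exact Icc_subset_Icc (by omega) this

section ChangeOfGenerators

variable {α G : Type} [Group G] (g : FreeGroup α →* G) (t₀ : G) (e : α → ℤ)

def adapt : FreeGroup (Option α) →* G :=
  FreeGroup.lift fun o => o.elim t₀ fun a => g (.of a) * t₀ ^ (-e a)

def rewriteGens : FreeGroup α →* FreeGroup (Option α) :=
  FreeGroup.lift fun a => x a * t ^ e a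

@[simp]
theorem adapt_t : adapt g t₀ e t = t₀ := FreeGroup.lift_apply_of

@[simp]
theorem adapt_x (a : α) : adapt g t₀ e (x a) = g (.of a) * t₀ ^ (-e a) := FreeGroup.lift_apply_of

@[simp]
theorem adapt_rewriteGens (w : FreeGroup α) : adapt g t₀ e (rewriteGens e w) = g w := by
  suffices (adapt g t₀ e).comp (rewriteGens e) = g from DFunLike.congr_fun this w
  ext a
  simp [rewriteGens]

theorem adapt_surjective (hg : Function.Surjective g) : Function.Surjective (adapt g t₀ e) :=
  .of_comp fun y => (hg y).imp fun w hw => (adapt_rewriteGens g t₀ e w).trans hw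

theorem ker_adapt_le {w₀ : FreeGroup α} (hw₀ : g w₀ = t₀) (hg : Function.Surjective g)
    {rels : Set (FreeGroup α)} (hker : g.ker = normalClosure rels) :
    (adapt g t₀ e).ker ≤
      normalClosure (insert (rewriteGens e w₀ * t⁻¹) (rewriteGens e '' rels)) := by
  set Q := normalClosure (insert (rewriteGens e w₀ * t⁻¹) (rewriteGens e '' rels))
  let q := QuotientGroup.mk' Q
  have hrels : g.ker ≤ (q.comp (rewriteGens e)).ker := by
    refine hker ▸ normalClosure_le_normal fun r hr => ?_
    simpa [q] using subset_normalClosure (mem_insert_of_mem _ (mem_image_of_mem _ hr))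
  let Ψ := g.liftOfSurjective hg ⟨_, hrels⟩
  have hΨ (w) : Ψ (g w) = q (rewriteGens e w) := g.liftOfRightInverse_comp_apply _ _ _ w
  have hΨt : Ψ t₀ = q t := by
    rw [← hw₀, hΨ, ← mul_inv_eq_one, ← map_inv, ← map_mul, QuotientGroup.mk'_apply,
      QuotientGroup.eq_one_iff]
    exact subset_normalClosure (mem_insert _ _)
  have hΨadapt : Ψ.comp (adapt g t₀ e) = q := by
    ext (_ | a) <;> simp [hΨ, hΨt, rewriteGens]
  intro w hw
  have hqw := DFunLike.congr_fun hΨadapt w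
  rw [MonoidHom.comp_apply, MonoidHom.mem_ker.1 hw, map_one] at hqw
  exact (QuotientGroup.eq_one_iff w).1 hqw.symm

/-- A Tietze transformation: the new generator `t` comes with the relator saying `t = t₀`. -/
theorem ker_adapt {w₀ : FreeGroup α} (hw₀ : g w₀ = t₀) (hg : Function.Surjective g)
    {rels : Set (FreeGroup α)} (hker : g.ker = normalClosure rels) :
    (adapt g t₀ e).ker =
      normalClosure (insert (rewriteGens e w₀ * t⁻¹) (rewriteGens e '' rels)) := by
  refine le_antisymm (ker_adapt_le g t₀ e hw₀ hg hker) (normalClosure_le_normal ?_)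
  rintro _ (rfl | ⟨r, hr, rfl⟩)
  · simp [hw₀]
  · have : r ∈ g.ker := hker ▸ subset_normalClosure hr
    simpa using this

theorem apply_adapt_eq_degree (ε : G →* Multiplicative ℤ) (ht₀ : ε t₀ = ofAdd 1)
    (w : FreeGroup (Option α)) : ε (adapt g t₀ (fun a => toAdd (ε (g (.of a)))) w) = degree w := by
  suffices ε.comp (adapt g t₀ _) = degree from DFunLike.congr_fun this w
  ext (_ | a) <;> simp [ht₀, ← ofAdd_zsmul]

end ChangeOfGenerators

section ConjHNN

variable {G : Type} [Group G] (s : G) {A B : Subgroup G} (hB : B ≤ A)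
  (hB' : B.map (MulAut.conj s : G →* G) ≤ A)

def conjSubgroupOfEquiv :
    B.subgroupOf A ≃* (B.map (MulAut.conj s : G →* G)).subgroupOf A :=
  (subgroupOfEquivOfLe hB).trans
    (((MulAut.conj s).subgroupMap B).trans (subgroupOfEquivOfLe hB').symm)

theorem coe_conjSubgroupOfEquiv (b : B.subgroupOf A) :
    ((conjSubgroupOfEquiv s hB hB' b : A) : G) = s * b * s⁻¹ := rfl

abbrev ConjHNN : Type :=
  HNNExtension A (B.subgroupOf A) _ (conjSubgroupOfEquiv s hB hB')

def ConjHNN.lift : ConjHNN s hB hB' →* G :=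
  HNNExtension.lift A.subtype s fun b => by
    simp only [coe_subtype, coe_conjSubgroupOfEquiv]
    group

@[simp]
theorem ConjHNN.lift_t : ConjHNN.lift s hB hB' HNNExtension.t = s := HNNExtension.lift_t ..

@[simp]
theorem ConjHNN.lift_of (a : A) : ConjHNN.lift s hB hB' (HNNExtension.of a) = a :=
  HNNExtension.lift_of ..

theorem ConjHNN.t_mul_of_mul_t_inv (a : A) (ha : (a : G) ∈ B) :
    (HNNExtension.t * HNNExtension.of a * HNNExtension.t⁻¹ : ConjHNN s hB hB') =
      HNNExtension.of ⟨s * a * s⁻¹, hB' (mem_map_of_mem _ ha)⟩ :=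
  (HNNExtension.equiv_eq_conj (φ := conjSubgroupOfEquiv s hB hB') ⟨a, ha⟩).symm

end ConjHNN

section Realization

variable {G : Type} [Group G] (p : FreeGroup (Option ι) →* G) (L : ℕ)

def base : Subgroup G := (window (Icc 0 (L : ℤ))).map p

def assoc : Subgroup G := (window (Icc 0 (L - 1 : ℤ))).map p

theorem assoc_le_base : assoc p L ≤ base p L :=
  map_mono (window_mono (Icc_subset_Icc le_rfl (by omega)))

theorem map_conj_assoc_le_base : (assoc p L).map (MulAut.conj (p t) : G →* G) ≤ base p L := by
  rintro _ ⟨_, ⟨w, hw, rfl⟩, rfl⟩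
  refine ⟨t * w * t⁻¹, ?_, by simp⟩
  simpa using conj_zpow_mem_window (J' := Icc 0 (L : ℤ)) 1
    (fun j hj => by grind) hw

abbrev Ext : Type := ConjHNN (p t) (assoc_le_base p L) (map_conj_assoc_le_base p L)

theorem x_mem_window (i : ι) : x i ∈ window (Icc 0 (L : ℤ)) :=
  xConj_zero i ▸ xConj_mem_window i ⟨le_rfl, by omega⟩

def ofFree : FreeGroup (Option ι) →* Ext p L :=
  FreeGroup.lift fun o => o.elim HNNExtension.t fun i =>
    HNNExtension.of ⟨p (x i), mem_map_of_mem p (x_mem_window L i)⟩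

@[simp]
theorem ofFree_t : ofFree p L t = HNNExtension.t := FreeGroup.lift_apply_of

@[simp]
theorem ofFree_x (i : ι) :
    ofFree p L (x i) = HNNExtension.of ⟨p (x i), mem_map_of_mem p (x_mem_window L i)⟩ :=
  FreeGroup.lift_apply_of

@[simp]
theorem lift_ofFree (w : FreeGroup (Option ι)) : ConjHNN.lift _ _ _ (ofFree p L w) = p w := by
  suffices (ConjHNN.lift _ _ _).comp (ofFree p L) = p from DFunLike.congr_fun this w
  ext (_ | i) <;> simp

theorem canonicalEps_ofFree (w : FreeGroup (Option ι)) :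
    canonicalEps _ _ _ (ofFree p L w) = degree w := by
  suffices (canonicalEps _ _ _).comp (ofFree p L) = degree from DFunLike.congr_fun this w
  ext (_ | i) <;> simp [canonicalEps]

theorem ofFree_xConj (i : ι) (k : ℕ) (hk : k ≤ L) (h : p (xConj i k) ∈ base p L) :
    ofFree p L (xConj i k) = HNNExtension.of ⟨p (xConj i k), h⟩ := by
  induction k with
  | zero => simp [xConj_zero]
  | succ k ih =>
    have hB : p (xConj i k) ∈ assoc p L :=
      mem_map_of_mem p (xConj_mem_window i ⟨by positivity, by omega⟩)
    have hconj : xConj i (k + 1 : ℕ) = t * xConj i k * t⁻¹ := by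
      simp only [xConj, Nat.cast_succ, zpow_add_one]
      group
    calc ofFree p L (xConj i (k + 1 : ℕ))
        = HNNExtension.t * HNNExtension.of ⟨p (xConj i k), assoc_le_base p L hB⟩ *
            HNNExtension.t⁻¹ := by
          rw [hconj, map_mul, map_mul, map_inv, ofFree_t, ih (by omega)]
      _ = HNNExtension.of ⟨p t * p (xConj i k) * (p t)⁻¹, _⟩ :=
          ConjHNN.t_mul_of_mul_t_inv _ _ _ _ hB
      _ = HNNExtension.of ⟨p (xConj i (k + 1 : ℕ)), h⟩ := by
          congr 2
          rw [hconj, map_mul, map_mul, map_inv]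

theorem ofFree_eq_of_mem_window {w : FreeGroup (Option ι)} (hw : w ∈ window (Icc 0 (L : ℤ))) :
    ofFree p L w = HNNExtension.of ⟨p w, mem_map_of_mem p hw⟩ := by
  have hrange : (window (Icc 0 (L : ℤ))).map (ofFree p L) ≤ (HNNExtension.of).range := by
    rw [map_le_iff_le_comap, window, closure_le]
    rintro _ ⟨i, -, j, ⟨hj0, hjL⟩, rfl⟩
    lift j to ℕ using hj0
    have hj : (j : ℤ) ∈ Icc 0 (L : ℤ) := ⟨by positivity, hjL⟩
    exact ⟨⟨_, mem_map_of_mem p (xConj_mem_window i hj)⟩,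
      (ofFree_xConj p L i j (by exact_mod_cast hjL) _).symm⟩
  -- `ConjHNN.lift ∘ of` is the inclusion of `base p L` in `G`, so `a` is recovered from `p w`.
  obtain ⟨a, ha⟩ := hrange (mem_map_of_mem _ hw)
  rw [← ha]
  congr 1
  ext
  simpa using congrArg (ConjHNN.lift _ _ _) ha

theorem ofFree_eq_one_of_mem_window {N : ℕ} {w : FreeGroup (Option ι)}
    (hw : w ∈ window (Icc (-N : ℤ) N)) (hpw : p w = 1) : ofFree p (2 * N) w = 1 := by
  have hshift : t ^ (N : ℤ) * w * (t ^ (N : ℤ))⁻¹ ∈ window (Icc 0 ((2 * N : ℕ) : ℤ)) :=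
    conj_zpow_mem_window N (fun j hj => by grind) hw
  have h1 : ofFree p (2 * N) (t ^ (N : ℤ) * w * (t ^ (N : ℤ))⁻¹) = 1 := by
    rw [ofFree_eq_of_mem_window p _ hshift, ← map_one HNNExtension.of]
    congr 1
    ext
    simp [hpw]
  simpa using h1

end Realization

theorem fg_map_window {G : Type} [Group G] [Finite ι] (p : FreeGroup (Option ι) →* G)
    {J : Set ℤ} (hJ : J.Finite) : Group.FG ((window J).map p) := by
  rw [window, MonoidHom.map_closure]
  have : Finite (p '' image2 xConj univ J) := ((finite_univ.image2 _ hJ).image p).to_subtype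
  exact Group.closure_finite_fg _

def splitting {π : Type} [Group π] {ε : π →* Multiplicative ℤ} (p : FreeGroup (Option ι) →* π)
    (hp : Function.Surjective p) (hε : ∀ w, ε (p w) = degree w) (L : ℕ) (Ψ : π →* Ext p L)
    (hΨ : ∀ w, Ψ (p w) = ofFree p L w) : HNNSplitting π ε where
  A := base p L
  B := (assoc p L).subgroupOf (base p L)
  B' := ((assoc p L).map (MulAut.conj (p t) : π →* π)).subgroupOf (base p L)
  φ := conjSubgroupOfEquiv _ _ _
  f := Ψ.toMulEquiv (ConjHNN.lift _ _ _)
    (by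
      ext y
      obtain ⟨w, rfl⟩ := hp y
      simp [hΨ])
    (by
      refine HNNExtension.hom_ext ?_ ?_
      · ext ⟨_, w, hw, rfl⟩
        simp [hΨ, ofFree_eq_of_mem_window p L hw]
      · simp [hΨ])
  compat y := by
    obtain ⟨w, rfl⟩ := hp y
    simp [hΨ, hε, canonicalEps_ofFree]

theorem exists_fg_splitting_of_presentation {π : Type} [Group π] {ε : π →* Multiplicative ℤ}
    [Finite ι] (p : FreeGroup (Option ι) →* π) (hp : Function.Surjective p)
    (hε : ∀ w, ε (p w) = degree w) {R : Set (FreeGroup (Option ι))} (hR : R.Finite)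
    (hker : p.ker = normalClosure R) :
    ∃ s : HNNSplitting π ε, Group.FG s.A ∧ Group.FG s.B := by
  have hpR : ∀ r ∈ R, p r = 1 := fun r hr => by
    rw [← p.mem_ker, hker]
    exact subset_normalClosure hr
  obtain ⟨N, hN⟩ := exists_window_Icc_of_finite hR fun r hr => by rw [← hε, hpR r hr, map_one]
  have hkill : p.ker ≤ (ofFree p (2 * N)).ker :=
    hker ▸ normalClosure_le_normal fun r hr => ofFree_eq_one_of_mem_window p (hN r hr) (hpR r hr)
  let Ψ := p.liftOfSurjective hp ⟨ofFree p (2 * N), hkill⟩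
  have hΨ (w) : Ψ (p w) = ofFree p (2 * N) w := p.liftOfRightInverse_comp_apply _ _ _ w
  have : Group.FG (assoc p (2 * N)) := fg_map_window p (finite_Icc _ _)
  refine ⟨splitting p hp hε (2 * N) Ψ hΨ, fg_map_window p (finite_Icc _ _), ?_⟩
  exact Group.fg_of_surjective
    (f := (subgroupOfEquivOfLe (assoc_le_base p (2 * N))).symm.toMonoidHom) (MulEquiv.surjective _)

end BieriStrebel

open BieriStrebel Multiplicative in
/-- a finitely presented group `π` with a surjective homomorphism
`ε : π → ℤ` admits a splitting over a finitely generated group `B` with finitely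
generated base group `A`. -/
theorem exists_fg_splitting (π : Type) [Group π]
    (hfp : ∃ (n : ℕ) (rels : Set (FreeGroup (Fin n))),
      rels.Finite ∧ Nonempty (π ≃* PresentedGroup rels))
    (ε : π →* Multiplicative ℤ) (hsurj : Function.Surjective ε) :
    ∃ s : HNNSplitting π ε, Group.FG s.A ∧ Group.FG s.B := by
  obtain ⟨n, rels, hfin, ⟨θ⟩⟩ := hfp
  obtain ⟨t₀, ht₀⟩ := hsurj (ofAdd 1)
  let g : FreeGroup (Fin n) →* π := θ.symm.toMonoidHom.comp (PresentedGroup.mk rels)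
  have hg : Function.Surjective g := θ.symm.surjective.comp (PresentedGroup.mk_surjective rels)
  have hker : g.ker = Subgroup.normalClosure rels := by
    ext w
    simp [g, PresentedGroup.mk_eq_one_iff]
  obtain ⟨w₀, hw₀⟩ := hg t₀
  exact exists_fg_splitting_of_presentation _ (adapt_surjective g t₀ _ hg)
    (apply_adapt_eq_degree g t₀ ε ht₀) ((hfin.image _).insert _) (ker_adapt g t₀ _ hw₀ hg hker)
end

section
/- Let A be a group with subgroups B, B' ≤ A and φ : B ≃ B' an isomorphism, let π = HNN(A,B,B',φ) with canonical epimorphism ε₀ : π → ℤ. Assume B is a free group of rank n (i.e., B ≅ FreeGroup (Fin n)), and assume there exists g ∈ A such that the homomorphism from the free product B ∗ ℤ to A induced by the inclusion B ↪ A and by sending the generator of ℤ to g is injective. Then for every integer k > n there exist a group A₁, subgroups B₁, B₁' ≤ A₁ with B₁ ≅ FreeGroup (Fin k), an isomorphism φ₁ : B₁ ≃ B₁', and a splitting f : π ≅ HNN(A₁,B₁,B₁',φ₁) of (π, ε₀); that is, (π, ε₀) splits over free groups of every rank greater than n. -/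
/-!
Put `A₁ = A ∗ ⟨s⟩`, `B₁ = ⟨B, g⟩ ≅ B ∗ ℤ` and `B₁' = ⟨B', s⟩ ≅ B' ∗ ℤ`, identified by `φ` on `B`
and by `g ↦ s`. Adjoining `s` to `π` together with the relation `t g t⁻¹ = s` does not change
`π`, so `π = HNN(A₁, B₁, B₁', φ₁)` with the same stable letter, hence the same `ε₀`. The rank of
the free edge group has gone up by one, and `s` generates a free product with `B₁` inside `A₁`,
so the step can be repeated.
-/

open Monoid Coprod

/-- A splitting of `(π, ε)` over a free group of rank `k`: an HNN decomposition of `π`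
with base group `A₁` and amalgamating subgroup `B₁ ≅ FreeGroup (Fin k)`, compatible
with `ε`. -/
structure FreeSplitting (π : Type) [Group π] (ε : π →* Multiplicative ℤ) (k : ℕ) where
  A₁ : Type
  [instGroupA₁ : Group A₁]
  B₁ : Subgroup A₁
  B₁' : Subgroup A₁
  freeB₁ : B₁ ≃* FreeGroup (Fin k)
  φ₁ : B₁ ≃* B₁'
  f : π ≃* HNNExtension A₁ B₁ B₁' φ₁
  compat : ∀ x : π, ε x = canonicalEps B₁ B₁' φ₁ (f x)

attribute [instance] FreeSplitting.instGroupA₁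

open Function

namespace Monoid.Coprod

universe u v

variable {M M' : Type u} {N N' : Type v} [Group M] [Group M'] [Group N] [Group N']

/-- Followed by `M' ∗ N → M' ∗_M (M ∗ N)`, `map f id` becomes the inclusion of a factor of the
amalgam, which is injective. -/
theorem map_id_injective {f : M →* M'} (hf : Injective f) :
    Injective (map f (MonoidHom.id N)) := by
  let G : Bool → Type (max u v) := fun b => cond b (ULift.{v} M') (M ∗ N)
  let _ : ∀ b, Group (G b) := fun b => by cases b <;> dsimp [G] <;> infer_instance
  let φ : ∀ b, M →* G b := fun b =>
    Bool.rec (motive := fun b => M →* G b) inl (MulEquiv.ulift.symm.toMonoidHom.comp f) b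
  have hφ : ∀ b, Injective (φ b) := fun b => by
    cases b
    exacts [inl_injective, MulEquiv.ulift.symm.injective.comp hf]
  let r : M' ∗ N →* PushoutI φ :=
    lift ((PushoutI.of (φ := φ) true).comp MulEquiv.ulift.symm.toMonoidHom)
      ((PushoutI.of (φ := φ) false).comp inr)
  have : r.comp (map f (MonoidHom.id N)) = PushoutI.of (φ := φ) false := by
    ext m
    · exact (PushoutI.of_apply_eq_base φ true m).trans (PushoutI.of_apply_eq_base φ false m).symm
    · rfl
  refine Injective.of_comp (f := r) ?_
  rw [← MonoidHom.coe_comp, this]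
  exact PushoutI.of_injective hφ false

theorem map_injective {f : M →* M'} {g : N →* N'} (hf : Injective f) (hg : Injective g) :
    Injective (map f g) := by
  have : map f g = (swap N' M').comp ((map g (MonoidHom.id M')).comp
      ((swap M' N).comp (map f (MonoidHom.id N)))) := by
    ext <;> rfl
  rw [this]
  exact (swap_injective.comp (map_id_injective hg)).comp (swap_injective.comp (map_id_injective hf))

theorem injective_lift_range_subtype_zpowersHom_inr {H G : Type u} [Group H] [Group G]
    {f : H →* G} (hf : Injective f) :
    Injective (lift (inl.comp f).range.subtype
      (zpowersHom (G ∗ Multiplicative ℤ) (inr (.ofAdd 1)))) := by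
  let e := MonoidHom.ofInjective (f := (inl (N := Multiplicative ℤ)).comp f)
    (inl_injective.comp hf)
  have : lift (inl.comp f).range.subtype (zpowersHom (G ∗ Multiplicative ℤ) (inr (.ofAdd 1))) =
      (map f (MonoidHom.id _)).comp (MulEquiv.coprodCongr e.symm (MulEquiv.refl _)).toMonoidHom := by
    ext x
    · conv_lhs => rw [← e.apply_symm_apply x]
      rfl
    · simp
  rw [this]
  exact (map_injective hf fun _ _ h => h).comp (MulEquiv.injective _)

end Monoid.Coprod

noncomputable def FreeGroup.coprodEquivSum (α β : Type*) :
    FreeGroup α ∗ FreeGroup β ≃* FreeGroup (α ⊕ β) :=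
  MonoidHom.toMulEquiv
    (Coprod.lift (FreeGroup.map Sum.inl) (FreeGroup.map Sum.inr))
    (FreeGroup.lift (Sum.elim (inl ∘ FreeGroup.of) (inr ∘ FreeGroup.of)))
    (by ext <;> simp)
    (by ext (a | b) <;> simp)

noncomputable def coprodMultiplicativeIntEquivFreeGroup {G : Type*} [Group G] {m : ℕ}
    (e : G ≃* FreeGroup (Fin m)) : G ∗ Multiplicative ℤ ≃* FreeGroup (Fin (m + 1)) :=
  (MulEquiv.coprodCongr e FreeGroup.mulEquivIntOfUnique.symm).trans
    ((FreeGroup.coprodEquivSum _ _).trans (FreeGroup.freeGroupCongr finSumFinEquiv))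

namespace HNNExtension.FreeRankStep

variable {A : Type} [Group A]

def incl (B : Subgroup A) (g : A) : B ∗ Multiplicative ℤ →* A ∗ Multiplicative ℤ :=
  inl.comp (Coprod.lift B.subtype (zpowersHom A g))

def incl' (B' : Subgroup A) : B' ∗ Multiplicative ℤ →* A ∗ Multiplicative ℤ :=
  map B'.subtype (MonoidHom.id _)

theorem incl'_injective (B' : Subgroup A) : Injective (incl' B') :=
  map_injective B'.subtype_injective fun _ _ h => h

theorem incl_injective {B : Subgroup A} {g : A}
    (hg : Injective (Coprod.lift B.subtype (zpowersHom A g))) : Injective (incl B g) :=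
  inl_injective.comp hg

def baseMap {B B' : Subgroup A} (φ : B ≃* B') (g : A) :
    A ∗ Multiplicative ℤ →* HNNExtension A B B' φ :=
  Coprod.lift of (zpowersHom _ (t * of g * t⁻¹))

variable {B B' : Subgroup A} {g : A} (φ : B ≃* B')
  (hg : Injective (Coprod.lift B.subtype (zpowersHom A g)))

noncomputable def φ₁ : (incl B g).range ≃* (incl' B').range :=
  (MonoidHom.ofInjective (incl_injective hg)).symm.trans
    ((MulEquiv.coprodCongr φ (MulEquiv.refl _)).trans (MonoidHom.ofInjective (incl'_injective B')))

theorem φ₁_apply (c : B ∗ Multiplicative ℤ) :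
    (φ₁ φ hg ⟨incl B g c, c, rfl⟩ : A ∗ Multiplicative ℤ) =
      incl' B' (MulEquiv.coprodCongr φ (MulEquiv.refl _) c) := by
  have : (MonoidHom.ofInjective (incl_injective hg)).symm ⟨incl B g c, c, rfl⟩ = c :=
    (MonoidHom.ofInjective (incl_injective hg)).symm_apply_eq.2 rfl
  rw [φ₁, MulEquiv.trans_apply, MulEquiv.trans_apply, this]
  rfl

abbrev Extended : Type :=
  HNNExtension (A ∗ Multiplicative ℤ) (incl B g).range (incl' B').range (φ₁ φ hg)

theorem baseMap_incl_conj (c : B ∗ Multiplicative ℤ) :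
    t * baseMap φ g (incl B g c) * t⁻¹ =
      baseMap φ g (incl' B' (MulEquiv.coprodCongr φ (MulEquiv.refl _) c)) := by
  have : (MulAut.conj t).toMonoidHom.comp ((baseMap φ g).comp (incl B g)) =
      ((baseMap φ g).comp (incl' B')).comp
        (MulEquiv.coprodCongr φ (MulEquiv.refl (Multiplicative ℤ))).toMonoidHom := by
    ext b
    · simp [baseMap, incl, incl', equiv_eq_conj]
    · simp [baseMap, incl, incl']
  exact DFunLike.congr_fun this c

theorem t_mul_of_incl (c : B ∗ Multiplicative ℤ) :
    (t : Extended φ hg) * of (incl B g c) =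
      of (incl' B' (MulEquiv.coprodCongr φ (MulEquiv.refl _) c)) * t := by
  rw [← φ₁_apply φ hg c]
  exact t_mul_of (φ := φ₁ φ hg) ⟨incl B g c, c, rfl⟩

noncomputable def toExtended : HNNExtension A B B' φ →* Extended φ hg :=
  HNNExtension.lift (of.comp inl) t fun b => by
    simp only [MonoidHom.comp_apply]
    exact t_mul_of_incl φ hg (inl b)

noncomputable def ofExtended : Extended φ hg →* HNNExtension A B B' φ :=
  HNNExtension.lift (baseMap φ g) t <| by
    rintro ⟨_, c, rfl⟩
    rw [φ₁_apply, ← baseMap_incl_conj, inv_mul_cancel_right]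

theorem toExtended_of (a : A) : toExtended φ hg (of a) = of (inl a) := by
  rw [toExtended, HNNExtension.lift_of]; rfl

theorem toExtended_t : toExtended φ hg t = t := HNNExtension.lift_t _ _ _

theorem ofExtended_of (x : A ∗ Multiplicative ℤ) : ofExtended φ hg (of x) = baseMap φ g x :=
  HNNExtension.lift_of _ _ _ _

theorem ofExtended_t : ofExtended φ hg t = t := HNNExtension.lift_t _ _ _

noncomputable def equivExtended : HNNExtension A B B' φ ≃* Extended φ hg :=
  MonoidHom.toMulEquiv (toExtended φ hg) (ofExtended φ hg)
    (by ext <;> simp [toExtended_of, toExtended_t, ofExtended_of, ofExtended_t, baseMap])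
    (by
      have hs : (t : Extended φ hg) * of (inl g) = of (inr (.ofAdd 1)) * t := by
        simpa [incl, incl'] using t_mul_of_incl φ hg (inr (.ofAdd 1))
      ext
      · simp [toExtended_of, ofExtended_of, baseMap]
      · simp [toExtended_of, toExtended_t, ofExtended_of, baseMap, hs]
      · simp [toExtended_t, ofExtended_t])

theorem canonicalEps_equivExtended (x : HNNExtension A B B' φ) :
    canonicalEps _ _ (φ₁ φ hg) (equivExtended φ hg x) = canonicalEps B B' φ x := by
  have : (canonicalEps _ _ (φ₁ φ hg)).comp (toExtended φ hg) = canonicalEps B B' φ := by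
    ext <;> simp [canonicalEps, toExtended_of, toExtended_t]
  exact DFunLike.congr_fun this x

end HNNExtension.FreeRankStep


open HNNExtension.FreeRankStep in
theorem exists_freeSplitting_succ {A : Type} [Group A] {B B' : Subgroup A} (φ : B ≃* B')
    {m : ℕ} (e : B ≃* FreeGroup (Fin m)) {g : A}
    (hg : Injective (Coprod.lift B.subtype (zpowersHom A g))) :
    ∃ (S : FreeSplitting (HNNExtension A B B' φ) (canonicalEps B B' φ) (m + 1)) (s : S.A₁),
      Injective (Coprod.lift S.B₁.subtype (zpowersHom S.A₁ s)) :=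
  ⟨{ A₁ := A ∗ Multiplicative ℤ
     B₁ := (incl B g).range
     B₁' := (incl' B').range
     freeB₁ := (MonoidHom.ofInjective (incl_injective hg)).symm.trans
       (coprodMultiplicativeIntEquivFreeGroup e)
     φ₁ := φ₁ φ hg
     f := equivExtended φ hg
     compat := fun x => (canonicalEps_equivExtended φ hg x).symm },
    inr (.ofAdd 1), injective_lift_range_subtype_zpowersHom_inr hg⟩

namespace FreeSplitting

variable {π : Type} [Group π] {ε : π →* Multiplicative ℤ} {m k : ℕ}

def trans (S : FreeSplitting π ε m)
    (T : FreeSplitting (HNNExtension S.A₁ S.B₁ S.B₁' S.φ₁) (canonicalEps S.B₁ S.B₁' S.φ₁) k) :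
    FreeSplitting π ε k where
  A₁ := T.A₁
  B₁ := T.B₁
  B₁' := T.B₁'
  freeB₁ := T.freeB₁
  φ₁ := T.φ₁
  f := S.f.trans T.f
  compat x := (S.compat x).trans (T.compat (S.f x))

end FreeSplitting

theorem exists_freeSplitting_add_succ {A : Type} [Group A] {B B' : Subgroup A} (φ : B ≃* B')
    {m : ℕ} (e : B ≃* FreeGroup (Fin m)) {g : A}
    (hg : Injective (Coprod.lift B.subtype (zpowersHom A g))) (j : ℕ) :
    ∃ (S : FreeSplitting (HNNExtension A B B' φ) (canonicalEps B B' φ) (m + j + 1)) (s : S.A₁),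
      Injective (Coprod.lift S.B₁.subtype (zpowersHom S.A₁ s)) := by
  induction j with
  | zero => exact exists_freeSplitting_succ φ e hg
  | succ j ih =>
    obtain ⟨S, s, hs⟩ := ih
    obtain ⟨T, s', hs'⟩ := exists_freeSplitting_succ S.φ₁ S.freeB₁ hs
    exact ⟨S.trans T, s', hs'⟩

/-- if `(π, ε₀)` splits over a free group `B` of rank `n` with base `A`,
and some `g ∈ A` generates together with `B` a free product `B ∗ ⟨g⟩` inside `A`, then
`(π, ε₀)` splits over free groups of every rank `k > n`. -/
theorem splits_over_all_larger_free_ranks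
    {A : Type} [Group A] (B B' : Subgroup A) (φ : B ≃* B') (n : ℕ)
    (hBfree : Nonempty (B ≃* FreeGroup (Fin n)))
    (g : A)
    (hg : Function.Injective (Coprod.lift B.subtype (zpowersHom A g) :
      (B ∗ Multiplicative ℤ) →* A)) :
    ∀ k : ℕ, n < k →
      Nonempty (FreeSplitting (HNNExtension A B B' φ) (canonicalEps B B' φ) k) := by
  intro k hk
  obtain ⟨e⟩ := hBfree
  obtain ⟨j, rfl⟩ := Nat.exists_eq_add_of_lt hk
  obtain ⟨S, -⟩ := exists_freeSplitting_add_succ φ e hg j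
  exact ⟨S⟩
end

section
/- The one-relator group ⟨x, y, z | (y⁻¹x)² z y⁻¹ z⟩ (the presented group on three generators x, y, z with the single relator y⁻¹xy⁻¹xzy⁻¹z) is isomorphic to the free group of rank 2, FreeGroup (Fin 2). -/
/-!
Put `a = y⁻¹x` and `b = z`. The relator holds exactly when `y = b a² b`, so `y`, and with it
`x = y a`, is a word in `a` and `b`: eliminating `y` is a Tietze transformation to the free group
on `a, b`, realised by the mutually inverse maps `x ↦ b a² b a`, `y ↦ b a² b`, `z ↦ b` and
`a ↦ y⁻¹x`, `b ↦ z`. Here `x, y, z` are `of 0, of 1, of 2` and `a, b` are `of 0, of 1`.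
-/

namespace KnotFiveTwo

open FreeGroup (of)

theorem relation_iff_eq {G : Type*} [Group G] (x y z : G) :
    y⁻¹ * x * y⁻¹ * x * z * y⁻¹ * z = 1 ↔ y = z * (y⁻¹ * x) ^ 2 * z := by
  have hconj :
      z * (y⁻¹ * x * y⁻¹ * x * z * y⁻¹ * z) * z⁻¹ = z * (y⁻¹ * x) ^ 2 * z * y⁻¹ := by
    rw [sq]; group
  rw [← conj_eq_one_iff (a := z), hconj, mul_inv_eq_one, eq_comm]

abbrev relator : FreeGroup (Fin 3) :=
  (of 1)⁻¹ * of 0 * (of 1)⁻¹ * of 0 * of 2 * (of 1)⁻¹ * of 2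

abbrev DoubleBaseGroup : Type := PresentedGroup ({relator} : Set (FreeGroup (Fin 3)))

theorem of_one_eq :
    (PresentedGroup.of 1 : DoubleBaseGroup) =
      .of 2 * ((PresentedGroup.of 1)⁻¹ * .of 0) ^ 2 * .of 2 :=
  (relation_iff_eq _ _ _).1 (PresentedGroup.one_of_mem rfl)

def toFree : DoubleBaseGroup →* FreeGroup (Fin 2) :=
  PresentedGroup.toGroup
    (f := ![of 1 * of 0 ^ 2 * of 1 * of 0, of 1 * of 0 ^ 2 * of 1, of 1]) <| by
    rintro r rfl
    simp only [map_mul, map_inv, FreeGroup.lift_apply_of]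
    refine (relation_iff_eq _ _ _).2 ?_
    simp only [Matrix.cons_val, sq]
    group

def ofFree : FreeGroup (Fin 2) →* DoubleBaseGroup :=
  FreeGroup.lift ![(PresentedGroup.of 1)⁻¹ * .of 0, .of 2]

theorem ofFree_comp_toFree : ofFree.comp toFree = MonoidHom.id DoubleBaseGroup := by
  refine PresentedGroup.ext fun i => ?_
  fin_cases i <;> simp [toFree, ofFree, ← of_one_eq]

theorem toFree_comp_ofFree : toFree.comp ofFree = MonoidHom.id (FreeGroup (Fin 2)) := by
  refine FreeGroup.ext_hom _ _ fun i => ?_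
  fin_cases i <;> simp [toFree, ofFree, sq, mul_assoc]

end KnotFiveTwo

/-- the one-relator group `⟨x, y, z | (y⁻¹x)² z y⁻¹ z⟩` is isomorphic to the
free group of rank 2. (Here `x = of 0`, `y = of 1`, `z = of 2`.) -/
theorem doubleBaseGroup_is_free_of_rank_two :
    Nonempty
      (PresentedGroup
        ({(FreeGroup.of 1)⁻¹ * FreeGroup.of 0 * (FreeGroup.of 1)⁻¹ * FreeGroup.of 0 *
            FreeGroup.of 2 * (FreeGroup.of 1)⁻¹ * FreeGroup.of 2} :
          Set (FreeGroup (Fin 3))) ≃* FreeGroup (Fin 2)) :=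
  ⟨KnotFiveTwo.toFree.toMulEquiv KnotFiveTwo.ofFree KnotFiveTwo.ofFree_comp_toFree
    KnotFiveTwo.toFree_comp_ofFree⟩
end

section
/- The presented group G = ⟨x, y, z | x⁻²z² = y³⟩ (three generators x, y, z with the single relator x⁻¹x⁻¹zzy⁻¹y⁻¹y⁻¹) is not a free group: there is no type S such that G is isomorphic to FreeGroup S. -/
/-!
Count homomorphisms into `S₃`. A free group on `S` has `6 ^ |S|` of them when `S` is finite and
infinitely many otherwise, whereas `⟨x, y, z | x⁻²z² = y³⟩` has exactly `54`, the number of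
solutions of `x⁻²z² = y³` in `S₃`; and `54` is not a power of `6`.
-/

namespace PresentedGroup

variable {α G : Type*} [Group G]

def homEquiv (rels : Set (FreeGroup α)) :
    (PresentedGroup rels →* G) ≃ {f : α → G // ∀ r ∈ rels, FreeGroup.lift f r = 1} where
  toFun φ := ⟨φ ∘ of, fun r hr => by
    have hlift : FreeGroup.lift (φ ∘ of) = φ.comp (mk rels) :=
      FreeGroup.ext_hom _ _ fun _ => by simp [of]
    rw [hlift, MonoidHom.comp_apply, one_of_mem hr, map_one]⟩
  invFun f := toGroup f.2
  left_inv φ := ext fun _ => toGroup.of _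
  right_inv f := Subtype.ext <| funext fun _ => toGroup.of f.2

end PresentedGroup

theorem FreeGroup.card_monoidHom (S G : Type*) [Group G] :
    Nat.card (FreeGroup S →* G) = Nat.card (S → G) :=
  Nat.card_congr FreeGroup.lift.symm

theorem six_pow_ne_fifty_four (k : ℕ) : 6 ^ k ≠ 54 := by
  rcases k with _ | _ | _ | k
  · decide
  · decide
  · decide
  · rw [pow_succ, pow_succ, pow_succ]
    omega

abbrev tripleBaseRelator : FreeGroup (Fin 3) :=
  (FreeGroup.of 0)⁻¹ * (FreeGroup.of 0)⁻¹ * FreeGroup.of 2 * FreeGroup.of 2 *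
    (FreeGroup.of 1)⁻¹ * (FreeGroup.of 1)⁻¹ * (FreeGroup.of 1)⁻¹

abbrev TripleBaseGroup : Type := PresentedGroup {tripleBaseRelator}

theorem card_monoidHom_tripleBaseGroup (G : Type*) [Group G] :
    Nat.card (TripleBaseGroup →* G) =
      Nat.card {f : Fin 3 → G // (f 0)⁻¹ ^ 2 * f 2 ^ 2 = f 1 ^ 3} := by
  refine Nat.card_congr ((PresentedGroup.homEquiv _).trans (Equiv.subtypeEquivRight fun f => ?_))
  simp only [Set.mem_singleton_iff, forall_eq, map_mul, map_inv, FreeGroup.lift_apply_of]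
  rw [← mul_inv_eq_one (b := f 1 ^ 3)]
  simp only [pow_succ, pow_zero, one_mul, mul_inv_rev, mul_assoc]

set_option maxRecDepth 20000 in
theorem card_monoidHom_tripleBaseGroup_perm_fin_three :
    Nat.card (TripleBaseGroup →* Equiv.Perm (Fin 3)) = 54 := by
  rw [card_monoidHom_tripleBaseGroup, Nat.card_eq_fintype_card]
  decide

/-- the presented group `⟨x, y, z | x⁻²z² = y³⟩` (with the single relator
`x⁻¹x⁻¹zzy⁻¹y⁻¹y⁻¹`, where `x = of 0`, `y = of 1`, `z = of 2`) is not a free group. -/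
theorem tripleBaseGroup_not_free :
    ¬ ∃ S : Type,
        Nonempty
          (PresentedGroup
            ({(FreeGroup.of 0)⁻¹ * (FreeGroup.of 0)⁻¹ * FreeGroup.of 2 * FreeGroup.of 2 *
                (FreeGroup.of 1)⁻¹ * (FreeGroup.of 1)⁻¹ * (FreeGroup.of 1)⁻¹} :
              Set (FreeGroup (Fin 3))) ≃* FreeGroup S) := by
  rintro ⟨S, ⟨e⟩⟩
  have hcard : Nat.card (S → Equiv.Perm (Fin 3)) = 54 := by
    rw [← FreeGroup.card_monoidHom, ← Nat.card_congr e.monoidHomCongrLeftEquiv,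
      card_monoidHom_tripleBaseGroup_perm_fin_three]
  have : Finite S := by
    by_contra hS
    have : Infinite S := not_finite_iff_infinite.mp hS
    simp at hcard
  rw [Nat.card_fun, Nat.card_perm, Nat.card_fin] at hcard
  exact six_pow_ne_fifty_four _ hcard
end

section
/- The presented group on six generators a₀, b₀, a₁, b₁, a₂, b₂ with the four relators a₁b₀⁻¹, b₁⁻¹a₁b₁⁻¹((b₀⁻¹a₀)²)⁻¹, a₂b₁⁻¹, b₂⁻¹a₂b₂⁻¹((b₁⁻¹a₁)²)⁻¹ (i.e., the group ⟨a₀,b₀,a₁,b₁,a₂,b₂ | a₁ = b₀, b₁⁻¹a₁b₁⁻¹ = (b₀⁻¹a₀)², a₂ = b₁, b₂⁻¹a₂b₂⁻¹ = (b₁⁻¹a₁)²⟩) is isomorphic to the presented group ⟨x, y, z | x⁻²z² = y³⟩. -/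
/-!
Tietze transformations. The relations `a₁ = b₀` and `a₂ = b₁` eliminate `a₁, a₂`. With
`u = b₀⁻¹a₀` the second relation reads `b₀ = b₁u²b₁`, which eliminates `b₀` (and `a₀ = b₀u`).
What remains is `⟨u, b₁, b₂ | b₂⁻¹b₁b₂⁻¹ = (u²b₁)²⟩`, and the substitution `x = u`,
`y = (b₁u²)⁻¹`, `z = b₂b₁⁻¹` turns its relation into `z² = x²y³`. Conversely
`a₀ = (xy²)⁻¹`, `b₀ = a₁ = (x²y²)⁻¹`, `b₁ = a₂ = (x²y)⁻¹` and `b₂ = z(x²y)⁻¹`.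
-/

namespace PresentedGroup

variable {α β : Type*} {rels : Set (FreeGroup α)} {rels' : Set (FreeGroup β)}

theorem lift_of_eq_mk : FreeGroup.lift (of : α → PresentedGroup rels) = mk rels :=
  FreeGroup.ext_hom _ _ fun _ ↦ FreeGroup.lift_apply_of

theorem lift_of_eq_one_of_mem : ∀ r ∈ rels, FreeGroup.lift (of : α → PresentedGroup rels) r = 1 :=
  fun _ hr ↦ lift_of_eq_mk ▸ one_of_mem hr

theorem toGroup_comp_of {G : Type*} [Group G] {f : α → G}
    (h : ∀ r ∈ rels, FreeGroup.lift f r = 1) : toGroup h ∘ of = f :=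
  funext fun _ ↦ toGroup.of h

def mulEquivOfToGroup {f : α → PresentedGroup rels'} {g : β → PresentedGroup rels}
    (hf : ∀ r ∈ rels, FreeGroup.lift f r = 1) (hg : ∀ r ∈ rels', FreeGroup.lift g r = 1)
    (hgf : toGroup hg ∘ f = of) (hfg : toGroup hf ∘ g = of) :
    PresentedGroup rels ≃* PresentedGroup rels' :=
  (toGroup hf).toMulEquiv (toGroup hg)
    (ext fun a ↦ by simpa [toGroup.of] using congrFun hgf a)
    (ext fun b ↦ by simpa [toGroup.of] using congrFun hfg b)

end PresentedGroup

-- `a₀, b₀, a₁, b₁, a₂, b₂` are the generators `0, …, 5`, and `x, y, z` are `0, 1, 2`.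
abbrev amalgamRels : Set (FreeGroup (Fin 6)) :=
  {FreeGroup.of 2 * (FreeGroup.of 1)⁻¹,
    (FreeGroup.of 3)⁻¹ * FreeGroup.of 2 * (FreeGroup.of 3)⁻¹ *
      (((FreeGroup.of 1)⁻¹ * FreeGroup.of 0) ^ 2)⁻¹,
    FreeGroup.of 4 * (FreeGroup.of 3)⁻¹,
    (FreeGroup.of 5)⁻¹ * FreeGroup.of 4 * (FreeGroup.of 5)⁻¹ *
      (((FreeGroup.of 3)⁻¹ * FreeGroup.of 2) ^ 2)⁻¹}

abbrev oneRelatorRels : Set (FreeGroup (Fin 3)) :=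
  {(FreeGroup.of 0)⁻¹ * (FreeGroup.of 0)⁻¹ * FreeGroup.of 2 * FreeGroup.of 2 *
    (FreeGroup.of 1)⁻¹ * (FreeGroup.of 1)⁻¹ * (FreeGroup.of 1)⁻¹}

section

variable {G H : Type*} [Group G] [Group H]

theorem lift_amalgamRels_eq_one_iff (a : Fin 6 → G) :
    (∀ r ∈ amalgamRels, FreeGroup.lift a r = 1) ↔
      a 2 = a 1 ∧ (a 3)⁻¹ * a 2 * (a 3)⁻¹ = ((a 1)⁻¹ * a 0) ^ 2 ∧
        a 4 = a 3 ∧ (a 5)⁻¹ * a 4 * (a 5)⁻¹ = ((a 3)⁻¹ * a 2) ^ 2 := by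
  simp only [Set.forall_mem_insert, Set.mem_singleton_iff, forall_eq, map_mul, map_inv, map_pow,
    FreeGroup.lift_apply_of, mul_inv_eq_one]

theorem lift_oneRelatorRels_eq_one_iff (t : Fin 3 → G) :
    (∀ r ∈ oneRelatorRels, FreeGroup.lift t r = 1) ↔ t 2 ^ 2 = t 0 ^ 2 * t 1 ^ 3 := by
  simp only [Set.mem_singleton_iff, forall_eq, map_mul, map_inv, FreeGroup.lift_apply_of]
  rw [← mul_inv_eq_one (a := t 2 ^ 2), ← conj_eq_one_iff (a := (t 0 ^ 2)⁻¹) (b := t 2 ^ 2 * _)]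
  simp [pow_succ, mul_assoc]

def amalgamGens (t : Fin 3 → G) : Fin 6 → G :=
  ![(t 0 * t 1 ^ 2)⁻¹, (t 0 ^ 2 * t 1 ^ 2)⁻¹, (t 0 ^ 2 * t 1 ^ 2)⁻¹,
    (t 0 ^ 2 * t 1)⁻¹, (t 0 ^ 2 * t 1)⁻¹, t 2 * (t 0 ^ 2 * t 1)⁻¹]

def oneRelatorGens (a : Fin 6 → G) : Fin 3 → G :=
  ![(a 1)⁻¹ * a 0, (a 3 * ((a 1)⁻¹ * a 0) ^ 2)⁻¹, a 5 * (a 3)⁻¹]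

theorem comp_amalgamGens (φ : G →* H) (t : Fin 3 → G) :
    φ ∘ amalgamGens t = amalgamGens (φ ∘ t) := by
  funext i; fin_cases i <;> simp [amalgamGens]

theorem comp_oneRelatorGens (φ : G →* H) (a : Fin 6 → G) :
    φ ∘ oneRelatorGens a = oneRelatorGens (φ ∘ a) := by
  funext i; fin_cases i <;> simp [oneRelatorGens]

theorem oneRelatorGens_amalgamGens (t : Fin 3 → G) : oneRelatorGens (amalgamGens t) = t := by
  funext i; fin_cases i <;> simp [oneRelatorGens, amalgamGens, pow_succ, mul_assoc]

theorem lift_amalgamRels_amalgamGens_iff (t : Fin 3 → G) :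
    (∀ r ∈ amalgamRels, FreeGroup.lift (amalgamGens t) r = 1) ↔
      ∀ r ∈ oneRelatorRels, FreeGroup.lift t r = 1 := by
  rw [lift_amalgamRels_eq_one_iff, lift_oneRelatorRels_eq_one_iff]
  simp only [amalgamGens, Matrix.cons_val, true_and]
  -- the second relation holds freely; the fourth is `z² = x²y³` up to a common left factor
  rw [and_iff_right (by simp [pow_succ, mul_assoc])]
  calc _ ↔ t 0 ^ 2 * t 1 * (t 2 ^ 2)⁻¹ = t 0 ^ 2 * t 1 * (t 0 ^ 2 * t 1 ^ 3)⁻¹ := by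
        simp [pow_succ, mul_assoc]
    _ ↔ _ := by rw [mul_right_inj, inv_inj]

theorem amalgamGens_oneRelatorGens {a : Fin 6 → G}
    (ha : ∀ r ∈ amalgamRels, FreeGroup.lift a r = 1) : amalgamGens (oneRelatorGens a) = a := by
  obtain ⟨h₁, h₂, h₃, -⟩ := (lift_amalgamRels_eq_one_iff a).1 ha
  obtain ⟨u, hu⟩ : ∃ u, a 0 = a 1 * u := ⟨_, (mul_inv_cancel_left (a 1) (a 0)).symm⟩
  have hb₀ : a 1 = a 3 * u ^ 2 * a 3 := by
    rw [← inv_mul_cancel_left (a 1) u, ← hu, ← h₂, h₁]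
    group
  funext i
  fin_cases i <;> simp [amalgamGens, oneRelatorGens, hu, h₁, h₃, hb₀, pow_succ, mul_assoc]

end

/-- the presented group
`⟨a₀,b₀,a₁,b₁,a₂,b₂ | a₁ = b₀, b₁⁻¹a₁b₁⁻¹ = (b₀⁻¹a₀)², a₂ = b₁, b₂⁻¹a₂b₂⁻¹ = (b₁⁻¹a₁)²⟩`
(with `a₀ = of 0`, `b₀ = of 1`, `a₁ = of 2`, `b₁ = of 3`, `a₂ = of 4`, `b₂ = of 5`)
is isomorphic to the presented group `⟨x, y, z | x⁻²z² = y³⟩`. -/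
theorem amalgam_iso_one_relator_group :
    Nonempty
      (PresentedGroup
        ({FreeGroup.of 2 * (FreeGroup.of 1)⁻¹,
          (FreeGroup.of 3)⁻¹ * FreeGroup.of 2 * (FreeGroup.of 3)⁻¹ *
            (((FreeGroup.of 1)⁻¹ * FreeGroup.of 0) ^ 2)⁻¹,
          FreeGroup.of 4 * (FreeGroup.of 3)⁻¹,
          (FreeGroup.of 5)⁻¹ * FreeGroup.of 4 * (FreeGroup.of 5)⁻¹ *
            (((FreeGroup.of 3)⁻¹ * FreeGroup.of 2) ^ 2)⁻¹} :
          Set (FreeGroup (Fin 6))) ≃*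
      PresentedGroup
        ({(FreeGroup.of 0)⁻¹ * (FreeGroup.of 0)⁻¹ * FreeGroup.of 2 * FreeGroup.of 2 *
            (FreeGroup.of 1)⁻¹ * (FreeGroup.of 1)⁻¹ * (FreeGroup.of 1)⁻¹} :
          Set (FreeGroup (Fin 3)))) := by
  have h₆ := PresentedGroup.lift_of_eq_one_of_mem (rels := amalgamRels)
  have h₃ := PresentedGroup.lift_of_eq_one_of_mem (rels := oneRelatorRels)
  have hf := (lift_amalgamRels_amalgamGens_iff _).2 h₃
  have hg : ∀ r ∈ oneRelatorRels, FreeGroup.lift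
      (oneRelatorGens (PresentedGroup.of (rels := amalgamRels))) r = 1 := by
    rw [← lift_amalgamRels_amalgamGens_iff, amalgamGens_oneRelatorGens h₆]
    exact h₆
  refine ⟨PresentedGroup.mulEquivOfToGroup hf hg ?_ ?_⟩
  · rw [comp_amalgamGens, PresentedGroup.toGroup_comp_of, amalgamGens_oneRelatorGens h₆]
  · rw [comp_oneRelatorGens, PresentedGroup.toGroup_comp_of, oneRelatorGens_amalgamGens]
end

section
/- In the free group F = FreeGroup (Fin 2) with free generators a, b, the element a⁻²b² is not a member of any free basis of F; equivalently, there is no automorphism ψ of FreeGroup (Fin 2) with ψ(a) = a⁻²b². -/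
/-!
Under the surjection `F₂ → (ℤ/2)²` sending `a, b` to the two standard generators, `a⁻²b²` maps
to `1`. A basis element cannot: composing with an automorphism that carries `a` to it would give a
surjection onto the Klein four-group generated by the image of the other basis element alone,
making `(ℤ/2)²` cyclic.
-/

namespace FreeGroup

theorem isCyclic_of_surjective_of_map_of_eq_one {G : Type*} [Group G]
    {φ : FreeGroup (Fin 2) →* G} (hφ : Function.Surjective φ) {i : Fin 2} (hi : φ (of i) = 1) :
    IsCyclic G := by
  refine isCyclic_iff_exists_zpowers_eq_top.mpr ⟨φ (of i.rev), top_unique ?_⟩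
  have hgen : Set.range (φ ∘ of) ⊆ Subgroup.zpowers (φ (of i.rev)) := by
    rintro _ ⟨j, rfl⟩
    obtain rfl | rfl : j = i ∨ j = i.rev := by fin_cases i <;> fin_cases j <;> simp
    · simp [hi]
    · exact Subgroup.mem_zpowers _
  rw [← MonoidHom.range_eq_top.mpr hφ]
  convert range_lift_le hgen
  ext; simp

theorem map_apply_of_ne_one_of_surjective {G : Type*} [Group G] [IsKleinFour G]
    {π : FreeGroup (Fin 2) →* G} (hπ : Function.Surjective π)
    (ψ : FreeGroup (Fin 2) ≃* FreeGroup (Fin 2)) (i : Fin 2) : π (ψ (of i)) ≠ 1 := fun h =>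
  IsKleinFour.not_isCyclic <|
    isCyclic_of_surjective_of_map_of_eq_one (φ := π.comp ψ.toMonoidHom) (hπ.comp ψ.surjective) h

def modTwo : FreeGroup (Fin 2) →* Multiplicative (ZMod 2 × ZMod 2) :=
  lift ![.ofAdd (1, 0), .ofAdd (0, 1)]

theorem modTwo_surjective : Function.Surjective modTwo := by
  have hspan : ∀ y : Multiplicative (ZMod 2 × ZMod 2),
      y = .ofAdd (1, 0) ^ y.toAdd.1.val * .ofAdd (0, 1) ^ y.toAdd.2.val := by decide
  intro y
  refine ⟨of 0 ^ y.toAdd.1.val * of 1 ^ y.toAdd.2.val, ?_⟩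
  rw [hspan y]
  simp [modTwo]

end FreeGroup

/-- in `FreeGroup (Fin 2)` with generators `a = of 0`, `b = of 1`, the element
`a⁻²b²` is not part of any free basis: no automorphism sends `a` to `a⁻²b²`. -/
theorem not_basis_element :
    ¬ ∃ ψ : FreeGroup (Fin 2) ≃* FreeGroup (Fin 2),
        ψ (FreeGroup.of 0) =
          (FreeGroup.of 0)⁻¹ * (FreeGroup.of 0)⁻¹ * FreeGroup.of 1 * FreeGroup.of 1 := by
  rintro ⟨ψ, hψ⟩
  apply FreeGroup.map_apply_of_ne_one_of_surjective FreeGroup.modTwo_surjective ψ 0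
  rw [hψ]
  decide
end

section
/- The homomorphism FreeGroup (Fin 3) → FreeGroup (Fin 2) determined on the three free generators by g₀ ↦ a, g₁ ↦ b⁻¹ab⁻¹, g₂ ↦ b⁻²ab⁻² is injective; that is, the elements a, b⁻¹ab⁻¹, b⁻²ab⁻² freely generate a rank-3 subgroup of the free group on a, b. -/
/-!
Ping-pong on reduced words. Let `xₙ = b⁻ⁿ a b⁻ⁿ`, let `Xₙ` be the set of elements whose reduced
word starts with `b⁻ⁿ a`, and `Yₙ` the set of those starting with `bⁿ a⁻¹`. Since `a ≠ b`, these
sets are pairwise disjoint for distinct exponents. Left multiplication by `xₙ` sends every `w ∉ Yₙ`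
into `Xₙ`: the `b⁻ⁿ` on the right of `xₙ` cannot cancel through the `a` of `w` unless `w` starts
with `bⁿ a⁻¹`. Symmetrically `xₙ⁻¹ = bⁿ a⁻¹ bⁿ` sends the complement of `Xₙ` into `Yₙ`, and the
ping-pong lemma gives injectivity for any family of distinct exponents, here `0, 1, 2`.
-/

universe u

namespace FreeGroup

open List

variable {α : Type u}

theorem mk_replicate (x : α × Bool) (n : ℕ) : mk (replicate n x) = mk [x] ^ n := by
  rw [pow_mk, flatten_replicate_singleton]

theorem isReduced_replicate_append {x : α × Bool} {L : List (α × Bool)} (hL : IsReduced L)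
    (hx : ∀ y ∈ L.head?, x.1 = y.1 → x.2 = y.2) (n : ℕ) : IsReduced (replicate n x ++ L) := by
  induction n with
  | zero => simpa
  | succ n ih =>
    rw [replicate_succ, cons_append]
    refine ih.cons fun y hy => ?_
    cases n with
    | zero => exact hx y (by simpa using hy)
    | succ n => simp_all [replicate_succ]

variable {a b : α}

/-- `pingPongWord a b n true` spells `b⁻ⁿ a` and `pingPongWord a b n false` spells `bⁿ a⁻¹`. -/
def pingPongWord (a b : α) (n : ℕ) (s : Bool) : List (α × Bool) :=
  replicate n (b, !s) ++ [(a, s)]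

theorem isReduced_pingPongWord_append (hab : a ≠ b) {n : ℕ} {s : Bool} {L : List (α × Bool)}
    (hL : IsReduced ((a, s) :: L)) : IsReduced (pingPongWord a b n s ++ L) := by
  rw [pingPongWord, append_assoc, singleton_append]
  exact isReduced_replicate_append hL (by simp [hab.symm]) n

theorem eq_of_pingPongWord_prefix (hab : a ≠ b) {n m : ℕ} {s t : Bool} {L : List (α × Bool)}
    (h₁ : pingPongWord a b n s <+: L) (h₂ : pingPongWord a b m t <+: L) : n = m ∧ s = t := by
  induction n generalizing m L with
  | zero =>
    cases m <;> obtain ⟨r, rfl⟩ := h₁ <;> simp_all [pingPongWord, replicate_succ]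
  | succ n ih =>
    cases m with
    | zero => obtain ⟨r, rfl⟩ := h₁; simp_all [pingPongWord, replicate_succ]
    | succ m =>
      obtain ⟨r, rfl⟩ := h₁
      simp only [pingPongWord, replicate_succ, cons_append, cons_prefix_cons] at h₂ ⊢
      simpa using ih (prefix_append _ r) h₂.2

section DecidableEq

variable [DecidableEq α]

theorem toWord_mk_mul_of_isReduced {L : List (α × Bool)} {w : FreeGroup α}
    (h : IsReduced (L ++ w.toWord)) : (mk L * w).toWord = L ++ w.toWord := by
  conv_lhs => rw [← mk_toWord (x := w), mul_mk, toWord_mk, h.reduce_eq]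

theorem pingPongWord_prefix_toWord_mul (hab : a ≠ b) (n : ℕ) (s : Bool) {w : FreeGroup α}
    (hw : ¬ pingPongWord a b n (!s) <+: w.toWord) :
    pingPongWord a b n s <+: (mk [(b, !s)] ^ n * mk [(a, s)] * mk [(b, !s)] ^ n * w).toWord := by
  set v := mk [(b, !s)] ^ n * w with hv_def
  -- If `v` started with `a ^ (∓1)`, then `w = b ^ (±n) * v` would start with `b ^ (±n) a ^ (∓1)`.
  have hv : IsReduced ((a, s) :: v.toWord) := by
    refine isReduced_toWord.cons ?_
    rintro ⟨c, t⟩ hy (rfl : a = c)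
    by_contra hst
    obtain rfl : t = !s := Bool.eq_not_of_ne (Ne.symm hst)
    obtain ⟨r, hr⟩ := head?_eq_some_iff.mp hy
    have hwv : w = mk (replicate n (b, s)) * v := by
      have hinv : mk [(b, s)] = (mk [(b, !s)])⁻¹ := by simp [inv_mk, invRev]
      rw [hv_def, mk_replicate, hinv, inv_pow, inv_mul_cancel_left]
    apply hw
    rw [hwv, toWord_mk_mul_of_isReduced, hr]
    · simp [pingPongWord]
    · exact isReduced_replicate_append isReduced_toWord (by simp [hr, hab.symm]) n
  rw [mul_assoc, ← hv_def, ← mk_replicate, mul_mk, ← pingPongWord, toWord_mk_mul_of_isReduced]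
  · exact prefix_append _ _
  · exact isReduced_pingPongWord_append hab hv

end DecidableEq

theorem injective_lift_inv_pow_mul_mul_inv_pow {ι : Type u} [Nontrivial ι] (hab : a ≠ b)
    {e : ι → ℕ} (he : Function.Injective e) :
    Function.Injective (lift fun i => (of b)⁻¹ ^ e i * of a * (of b)⁻¹ ^ e i) := by
  classical
  have mem_of_mk : ∀ n s, pingPongWord a b n s <+: (mk (pingPongWord a b n s)).toWord := by
    intro n s
    have hP : IsReduced (pingPongWord a b n s) := by
      simpa using isReduced_pingPongWord_append hab (n := n) (L := []) .singleton
    rw [toWord_mk, hP.reduce_eq]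
  refine injective_lift_of_ping_pong (G := FreeGroup α) _
    (fun i => {w : FreeGroup α | pingPongWord a b (e i) true <+: w.toWord})
    (fun i => {w : FreeGroup α | pingPongWord a b (e i) false <+: w.toWord})
    ?_ ?_ ?_ ?_ ?_ ?_
  · exact fun i => ⟨_, mem_of_mk (e i) true⟩
  · exact fun i j hij => Set.disjoint_left.mpr fun w hi hj =>
      hij (he (eq_of_pingPongWord_prefix hab hi hj).1)
  · exact fun i j hij => Set.disjoint_left.mpr fun w hi hj =>
      hij (he (eq_of_pingPongWord_prefix hab hi hj).1)
  · exact fun i j => Set.disjoint_left.mpr fun w hi hj =>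
      Bool.noConfusion (eq_of_pingPongWord_prefix hab hi hj).2
  · rintro i _ ⟨w, hw, rfl⟩
    exact pingPongWord_prefix_toWord_mul hab (e i) true hw
  · rintro i _ ⟨w, hw, rfl⟩
    have hinv : ((of b)⁻¹ ^ e i * of a * (of b)⁻¹ ^ e i)⁻¹ =
        of b ^ e i * (of a)⁻¹ * of b ^ e i := by
      group
    simp only [Pi.inv_apply, hinv]
    exact pingPongWord_prefix_toWord_mul hab (e i) false hw

end FreeGroup

/-- in `FreeGroup (Fin 2)` with `a = of 0`, `b = of 1`, the elements
`a`, `b⁻¹ab⁻¹`, `b⁻²ab⁻²` freely generate a rank-3 subgroup: the induced homomorphism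
from `FreeGroup (Fin 3)` is injective. -/
theorem rank_three_free_subgroup :
    Function.Injective
      (FreeGroup.lift (fun i : Fin 3 =>
        if i = 0 then FreeGroup.of 0
        else if i = 1 then
          (FreeGroup.of 1)⁻¹ * FreeGroup.of 0 * (FreeGroup.of 1)⁻¹
        else
          (FreeGroup.of 1)⁻¹ * (FreeGroup.of 1)⁻¹ * FreeGroup.of 0 *
            (FreeGroup.of 1)⁻¹ * (FreeGroup.of 1)⁻¹) :
        FreeGroup (Fin 3) →* FreeGroup (Fin 2)) := by
  convert FreeGroup.injective_lift_inv_pow_mul_mul_inv_pow (a := (0 : Fin 2)) (b := 1)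
    (by decide) (e := fun i : Fin 3 => (i : ℕ)) Fin.val_injective using 3
  funext i
  fin_cases i <;> simp [pow_two, mul_assoc]
end

section
/- The homomorphism FreeGroup (Fin 3) → FreeGroup (Fin 3) determined on the three free generators by g₀ ↦ b, g₁ ↦ b⁻¹ab⁻¹a, g₂ ↦ c is injective, where a, b, c are the free generators of the target; that is, the elements b, b⁻¹ab⁻¹a, c freely generate a rank-3 subgroup of the free group on a, b, c. -/
/-!
The map factors as `a ↦ b⁻¹a` (an automorphism, with inverse `a ↦ ba`) after
`(g₀, g₁, g₂) ↦ (b, a², c)`. The latter is injective by ping-pong: a positive power of a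
generator `x` sends every reduced word not starting with `x⁻¹` to one starting with `x`.
-/

open scoped Pointwise

namespace FreeGroup

universe u

variable {α : Type u} [DecidableEq α]

theorem startsWith_mk_pow_mul {x : α × Bool} {w : FreeGroup α}
    (hw : w ∉ startsWith (x.1, !x.2)) {n : ℕ} (hn : n ≠ 0) :
    mk [x] ^ n * w ∈ startsWith x := by
  induction n with
  | zero => exact absurd rfl hn
  | succ n ih =>
    rw [pow_succ', mul_assoc]
    apply startsWith_mk_mul
    rcases eq_or_ne n 0 with rfl | hn'
    · simpa using hw
    · exact Set.disjoint_left.1 (startsWith.disjoint_iff_ne.2 (by cases x; simp)) (ih hn')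

theorem injective_lift_pow_of_injective {ι : Type u} [Nontrivial ι] {σ : ι → α}
    (hσ : Function.Injective σ) {n : ι → ℕ} (hn : ∀ j, n j ≠ 0) :
    Function.Injective (lift fun j => of (σ j) ^ n j) := by
  have hinv (j : ι) : (of (σ j) ^ n j)⁻¹ = mk [(σ j, false)] ^ n j := by
    rw [← inv_pow, of, inv_mk]; rfl
  refine injective_lift_of_ping_pong (fun j => of (σ j) ^ n j) (fun j => startsWith (σ j, true))
    (fun j => startsWith (σ j, false)) (fun j => ⟨of (σ j), by simp [startsWith]⟩)
    (fun i j hij => startsWith.disjoint_iff_ne.2 (by simpa using hσ.ne hij))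
    (fun i j hij => startsWith.disjoint_iff_ne.2 (by simpa using hσ.ne hij))
    (fun i j => startsWith.disjoint_iff_ne.2 (by simp)) (fun j => ?_) (fun j => ?_)
  · rw [Set.smul_set_subset_iff]
    exact fun w hw => startsWith_mk_pow_mul (x := (σ j, true)) hw (hn j)
  · rw [Set.smul_set_subset_iff]
    intro w hw
    rw [Pi.inv_apply, smul_eq_mul, hinv]
    exact startsWith_mk_pow_mul (x := (σ j, false)) hw (hn j)

theorem injective_lift_update_of_zpow_mul {i j : α} (hji : j ≠ i) (k : ℤ) :
    Function.Injective (lift (Function.update of i (of j ^ k * of i))) := by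
  refine Function.LeftInverse.injective (g := lift (Function.update of i (of j ^ (-k) * of i))) ?_
  suffices (lift (Function.update of i (of j ^ (-k) * of i))).comp
      (lift (Function.update of i (of j ^ k * of i))) = MonoidHom.id _ from
    fun w => DFunLike.congr_fun this w
  ext l
  rcases eq_or_ne l i with rfl | hl
  · simp [hji, ← mul_assoc]
  · simp [hl]

end FreeGroup

/-- in `FreeGroup (Fin 3)` with `a = of 0`, `b = of 1`, `c = of 2`, the
elements `b`, `b⁻¹ab⁻¹a`, `c` freely generate a rank-3 subgroup: the induced
homomorphism from `FreeGroup (Fin 3)` is injective. -/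
theorem rank_three_free_subgroup' :
    Function.Injective
      (FreeGroup.lift (fun i : Fin 3 =>
        if i = 0 then FreeGroup.of 1
        else if i = 1 then
          (FreeGroup.of 1)⁻¹ * FreeGroup.of 0 * (FreeGroup.of 1)⁻¹ * FreeGroup.of 0
        else FreeGroup.of 2) :
        FreeGroup (Fin 3) →* FreeGroup (Fin 3)) := by
  have hsquare := FreeGroup.injective_lift_pow_of_injective (σ := (![1, 0, 2] : Fin 3 → Fin 3))
    (n := ![1, 2, 1]) (by decide) (by decide)
  have hshear := FreeGroup.injective_lift_update_of_zpow_mul (i := (0 : Fin 3)) (j := 1)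
    (by decide) (-1)
  convert hshear.comp hsquare using 2
  rw [← MonoidHom.coe_comp, DFunLike.coe_fn_eq]
  ext i
  fin_cases i <;> simp [sq, mul_assoc]
end

section
/- The homomorphism FreeGroup (Fin 2) → FreeGroup (Fin 2) determined on the two free generators by g₀ ↦ b, g₁ ↦ (b⁻¹a)² is injective; that is, the elements b and (b⁻¹a)² freely generate a rank-2 subgroup of the free group on a, b. -/
/-!
The automorphism `a ↦ b, b ↦ b⁻¹a` of the free group on `a, b` carries the pair `(a, b²)` to
`(b, (b⁻¹a)²)`, so it suffices that `a ↦ a, b ↦ b²` is injective. More generally, raising each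
generator `x` to a power `n x ≠ 0` is injective: repeating every letter `x^±1` of a reduced word
`n x` times gives a reduced word, so a nontrivial element has a nontrivial image.
-/

namespace FreeGroup

variable {α : Type*}

theorem IsReduced.flatMap_replicate {n : α → ℕ} (hn : ∀ x, n x ≠ 0) {L : List (α × Bool)}
    (h : IsReduced L) : IsReduced (L.flatMap fun p => List.replicate (n p.1) p) := by
  rw [List.flatMap_def, IsReduced, List.isChain_flatten (by simp [hn]), List.isChain_map]
  refine ⟨List.forall_mem_map.2 fun p _ => List.isChain_replicate_of_rel _ fun _ => rfl,
    h.imp fun p q hpq => ?_⟩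
  simp_all [List.getLast?_replicate, List.head?_replicate]

theorem mk_flatMap_replicate (n : α → ℕ) (L : List (α × Bool)) :
    mk (L.flatMap fun p => List.replicate (n p.1) p) = lift (fun x => of x ^ n x) (mk L) := by
  induction L with
  | nil => rfl
  | cons p L ih =>
    rw [List.flatMap_cons, ← mul_mk, ih, ← List.singleton_append, ← mul_mk, _root_.map_mul,
      ← List.flatten_replicate_singleton, ← pow_mk]
    obtain ⟨x, _ | _⟩ := p
    · rw [show mk [(x, false)] = (of x)⁻¹ from rfl]
      simp [inv_pow]
    · rw [show mk [(x, true)] = of x from rfl]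
      simp

theorem injective_lift_of_pow {n : α → ℕ} (hn : ∀ x, n x ≠ 0) :
    Function.Injective (lift fun x => of x ^ n x) := by
  classical
  refine (injective_iff_map_eq_one _).2 fun w hw => ?_
  have hred := isReduced_toWord (x := w) |>.flatMap_replicate hn
  rw [← mk_toWord (x := w), ← mk_flatMap_replicate, ← toWord_eq_nil_iff, toWord_mk,
    hred.reduce_eq] at hw
  rw [← toWord_eq_nil_iff, List.eq_nil_iff_forall_not_mem]
  simpa [List.flatMap_eq_nil_iff, hn] using hw

theorem injective_lift_of_one_of_one_inv_mul_of_zero :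
    Function.Injective (lift ![of 1, (of 1)⁻¹ * of 0] : FreeGroup (Fin 2) →* FreeGroup (Fin 2)) := by
  have hinv : (lift ![of 0 * of 1, of 0]).comp (lift ![of 1, (of 1)⁻¹ * of 0]) =
      MonoidHom.id (FreeGroup (Fin 2)) := by
    ext i
    fin_cases i <;> simp
  exact Function.LeftInverse.injective (DFunLike.congr_fun hinv)

end FreeGroup

open FreeGroup in
/-- in `FreeGroup (Fin 2)` with `a = of 0`, `b = of 1`, the elements `b`
and `(b⁻¹a)²` freely generate a rank-2 subgroup: the induced homomorphism from
`FreeGroup (Fin 2)` is injective. -/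
theorem rank_two_free_subgroup :
    Function.Injective
      (FreeGroup.lift (fun i : Fin 2 =>
        if i = 0 then FreeGroup.of 1
        else ((FreeGroup.of 1)⁻¹ * FreeGroup.of 0) ^ 2) :
        FreeGroup (Fin 2) →* FreeGroup (Fin 2)) := by
  have hfactor : (lift fun i : Fin 2 => if i = 0 then of 1 else ((of 1)⁻¹ * of 0) ^ 2 :
      FreeGroup (Fin 2) →* FreeGroup (Fin 2)) =
      (lift ![of 1, (of 1)⁻¹ * of 0]).comp (lift fun i => of i ^ ![1, 2] i) := by
    ext i
    fin_cases i <;> simp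
  rw [hfactor, MonoidHom.coe_comp]
  exact injective_lift_of_one_of_one_inv_mul_of_zero.comp (injective_lift_of_pow (by decide))
end

section
/- Let n ≥ 1, let z be a nontrivial element of FreeGroup (Fin n), and let l be a natural number. Consider F = FreeGroup (Option (Fin n)) with g = of none, and let ι : FreeGroup (Fin n) → F be the embedding sending the i-th generator to of (some i). Then the homomorphism FreeGroup (Fin n ⊕ Fin l) → F determined on generators by inl i ↦ of (some i) and inr j ↦ g^(j+1) · ι(z) · g^(−(j+1)) is injective; that is, the generators x₁,…,xₙ together with the conjugates gⁱ z g⁻ⁱ (1 ≤ i ≤ l) freely generate a free subgroup of rank n + l of the free group on x₁,…,xₙ, g. -/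
/-!
The generators fall into blocks: block `0` holds the `xᵢ`, block `k + 1` the single element
`gᵏ⁺¹ z g⁻⁽ᵏ⁺¹⁾`. The free group on all of them is the free product of the free groups on the
blocks, so by the ping-pong lemma for free products it suffices to find pairwise disjoint sets
`X k` such that every nontrivial element of block `k` maps `X m` into `X k` for `m ≠ k`.
Take `X k` to be the elements whose reduced word starts with exactly `k` letters `g` followed
by some `xᵢ±¹`. A nontrivial element of block `k` is `gᵏ ι(y) g⁻ᵏ` with `y ≠ 1` (for `k ≥ 1`,
`y` is a nonzero power of `z`, nontrivial because free groups are torsion-free), and in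
`gᵏ ι(y) g⁻ᵏ · gᵐ v = gᵏ ι(y) gᵐ⁻ᵏ v` nothing cancels when `m ≠ k`.
-/

universe u

open Function Pointwise

namespace List

theorem eq_of_replicate_append_eq_replicate_append {γ : Type*} {c : γ} {k m : ℕ}
    {L M : List γ} (h : replicate k c ++ L = replicate m c ++ M) (hL : c ∉ L.head?)
    (hM : c ∉ M.head?) : k = m := by
  wlog hkm : k ≤ m generalizing k m L M
  · exact (this h.symm hM hL (le_of_not_ge hkm)).symm
  obtain ⟨d, rfl⟩ := Nat.exists_eq_add_of_le hkm
  rw [replicate_add, append_assoc, append_cancel_left_eq] at h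
  subst h
  cases d with
  | zero => rfl
  | succ d => simp [replicate_succ] at hL

end List

namespace FreeGroup

theorem injective_lift_sigma_of_ping_pong {ι : Type*} [Nontrivial ι] {T : ι → Type*}
    {G : Type*} [Group G] (a : (Σ i, T i) → G)
    (hcard : 3 ≤ Cardinal.mk ι ∨ ∃ i, 3 ≤ Cardinal.mk (FreeGroup (T i)))
    {β : Type*} [MulAction G β] (X : ι → Set β) (hX : ∀ i, (X i).Nonempty)
    (hdisj : Pairwise (Disjoint on X))
    (hpp : Pairwise fun i j => ∀ w : FreeGroup (T i), w ≠ 1 →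
      lift (fun t => a ⟨i, t⟩) w • X j ⊆ X i) :
    Injective (lift a) := by
  let B := Monoid.CoprodI.FreeGroupBasis.coprodI fun i => FreeGroupBasis.ofFreeGroup (T i)
  have : lift a = (Monoid.CoprodI.lift fun i => lift fun t => a ⟨i, t⟩).comp
      B.repr.symm.toMonoidHom := by
    ext ⟨i, t⟩
    simp [B, Monoid.CoprodI.FreeGroupBasis.coprodI]
  rw [this, MonoidHom.coe_comp]
  exact (Monoid.CoprodI.lift_injective_of_ping_pong _ hcard X hX hdisj hpp).comp
    B.repr.symm.injective

def ConjBlock (α : Type u) : ℕ → Type u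
  | 0 => α
  | _ + 1 => PUnit

instance (α : Type u) (k : ℕ) : Unique (ConjBlock α (k + 1)) := inferInstanceAs (Unique PUnit)

variable {α : Type u}

def conjFamily (z : FreeGroup α) : (Σ k, ConjBlock α k) → FreeGroup (Option α)
  | ⟨0, x⟩ => of (some x)
  | ⟨k + 1, _⟩ => of none ^ (k + 1) * map some z * (of none ^ (k + 1))⁻¹

theorem exists_lift_conjFamily_eq_conj {z : FreeGroup α} (hz : z ≠ 1) (k : ℕ)
    {w : FreeGroup (ConjBlock α k)} (hw : w ≠ 1) :
    ∃ y ≠ 1,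
      lift (fun t => conjFamily z ⟨k, t⟩) w = of none ^ k * map some y * (of none ^ k)⁻¹ := by
  cases k with
  | zero => exact ⟨w, hw, by rw [pow_zero, one_mul, inv_one, mul_one, map_eq_lift]; rfl⟩
  | succ k =>
    obtain ⟨m, rfl⟩ : ∃ m : ℤ, of default ^ m = w :=
      ⟨equivIntOfUnique w, equivIntOfUnique.left_inv w⟩
    refine ⟨z ^ m, (IsMulTorsionFree.zpow_eq_one_iff_right hz).not.2 ?_, ?_⟩
    · rintro rfl
      exact hw (zpow_zero _)
    · simp [conjFamily, conj_zpow]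

variable [DecidableEq α]

theorem toWord_mul_of_fst_ne {x y : FreeGroup α}
    (h : ∀ a ∈ x.toWord.getLast?, ∀ b ∈ y.toWord.head?, a.1 ≠ b.1) :
    (x * y).toWord = x.toWord ++ y.toWord := by
  rw [toWord_mul, IsReduced.reduce_eq]
  exact List.isChain_append.2
    ⟨isReduced_toWord, isReduced_toWord, fun a ha b hb hab => absurd hab (h a ha b hb)⟩

theorem toWord_map_of_injective {β : Type*} [DecidableEq β] {f : α → β} (hf : Injective f)
    (x : FreeGroup α) : (map f x).toWord = x.toWord.map fun a => (f a.1, a.2) := by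
  conv_lhs => rw [← mk_toWord (x := x)]
  rw [map.mk, toWord_mk, IsReduced.reduce_eq]
  exact (List.isChain_map _).2 (isReduced_toWord.imp fun a b h hab => h (hf hab))

theorem fst_eq_of_mem_toWord_of_zpow {x : α} {m : ℤ} {a : α × Bool}
    (ha : a ∈ (of x ^ m).toWord) : a.1 = x := by
  cases m with
  | ofNat k =>
    rw [Int.ofNat_eq_natCast, zpow_natCast, toWord_of_pow] at ha
    rw [List.eq_of_mem_replicate ha]
  | negSucc k =>
    rw [zpow_negSucc, toWord_inv, toWord_of_pow, invRev, List.map_replicate,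
      List.reverse_replicate] at ha
    rw [List.eq_of_mem_replicate ha]

variable (α) in
def startsWithSome : Set (FreeGroup (Option α)) :=
  {u | ∃ x b L, u.toWord = (some x, b) :: L}

theorem toWord_of_none_zpow_mul {v : FreeGroup (Option α)} (hv : v ∈ startsWithSome α) (m : ℤ) :
    (of none ^ m * v).toWord = (of none ^ m).toWord ++ v.toWord := by
  obtain ⟨x, b, L, hL⟩ := hv
  refine toWord_mul_of_fst_ne fun a ha c hc => ?_
  rw [fst_eq_of_mem_toWord_of_zpow (List.mem_of_mem_getLast? ha)]
  rw [hL, List.head?_cons, Option.mem_some_iff] at hc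
  simp [← hc]

theorem map_some_mul_of_none_zpow_mul_mem {y : FreeGroup α} (hy : y ≠ 1) {m : ℤ} (hm : m ≠ 0)
    {v : FreeGroup (Option α)} (hv : v ∈ startsWithSome α) :
    map some y * (of none ^ m * v) ∈ startsWithSome α := by
  obtain ⟨c, L, hc⟩ := List.exists_cons_of_ne_nil <| mt toWord_eq_nil_iff.1 <|
    (IsMulTorsionFree.zpow_eq_one_iff_right (of_ne_one (none : Option α))).not.2 hm
  obtain ⟨d, M, hd⟩ := List.exists_cons_of_ne_nil (mt toWord_eq_nil_iff.1 hy)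
  have hc₁ : c.1 = none := fst_eq_of_mem_toWord_of_zpow (hc ▸ List.mem_cons_self)
  have hmap := toWord_map_of_injective (Option.some_injective α) y
  rw [hd] at hmap
  rw [startsWithSome, Set.mem_ofPred_eq, toWord_mul_of_fst_ne, hmap]
  · exact ⟨d.1, d.2, _, rfl⟩
  · rw [hmap, toWord_of_none_zpow_mul hv, hc]
    intro a ha b hb
    obtain ⟨a', -, rfl⟩ := List.mem_map.1 (List.mem_of_mem_getLast? ha)
    rw [List.cons_append, List.head?_cons, Option.mem_some_iff] at hb
    simp [← hb, hc₁]

theorem pairwise_disjoint_of_none_pow_smul_startsWithSome :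
    Pairwise (Disjoint on fun k : ℕ => (of (none : Option α) ^ k) • startsWithSome α) := by
  intro k m hkm
  refine Set.disjoint_left.2 ?_
  rintro _ ⟨v, hv, rfl⟩ ⟨w, hw, hwv⟩
  have h := congrArg toWord hwv
  simp only [smul_eq_mul, ← zpow_natCast] at h
  rw [toWord_of_none_zpow_mul hv, toWord_of_none_zpow_mul hw, zpow_natCast, zpow_natCast,
    toWord_of_pow, toWord_of_pow] at h
  obtain ⟨x, b, L, hL⟩ := hv
  obtain ⟨x', b', L', hL'⟩ := hw
  exact hkm (List.eq_of_replicate_append_eq_replicate_append h.symm (by simp [hL]) (by simp [hL']))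

theorem conj_smul_of_none_pow_smul_subset {y : FreeGroup α} (hy : y ≠ 1) {k m : ℕ}
    (hkm : k ≠ m) :
    (of (none : Option α) ^ k * map some y * (of none ^ k)⁻¹) •
        (of (none : Option α) ^ m) • startsWithSome α ⊆
      (of (none : Option α) ^ k) • startsWithSome α := by
  rintro _ ⟨_, ⟨v, hv, rfl⟩, rfl⟩
  refine ⟨_, map_some_mul_of_none_zpow_mul_mem hy (m := (m : ℤ) - k) (by omega) hv, ?_⟩
  simp only [smul_eq_mul]
  group

theorem injective_lift_conjFamily [Nonempty α] {z : FreeGroup α} (hz : z ≠ 1) :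
    Injective (lift (conjFamily z)) := by
  refine injective_lift_sigma_of_ping_pong _ (Or.inl ?_)
    (fun k => (of (none : Option α) ^ k) • startsWithSome α) (fun k => ?_)
    pairwise_disjoint_of_none_pow_smul_startsWithSome fun k m hkm w hw => ?_
  · simp
  · obtain ⟨x⟩ := ‹Nonempty α›
    exact ⟨_, Set.smul_mem_smul_set (a := of (none : Option α) ^ k) ⟨x, true, [], toWord_of _⟩⟩
  · obtain ⟨y, hy, h⟩ := exists_lift_conjFamily_eq_conj hz k hw
    rw [h]
    exact conj_smul_of_none_pow_smul_subset hy hkm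

end FreeGroup

/-- let `n ≥ 1`, let `z ≠ 1` in `FreeGroup (Fin n)` and `l : ℕ`. In
`F = FreeGroup (Option (Fin n))` with `g = of none` and the embedding
`ι : FreeGroup (Fin n) → F` induced by `some`, the generators `of (some i)` together with
the conjugates `gʲ⁺¹ (ι z) g⁻⁽ʲ⁺¹⁾` for `0 ≤ j < l` freely generate a free subgroup of
rank `n + l`: the induced homomorphism from `FreeGroup (Fin n ⊕ Fin l)` is injective. -/
theorem free_subgroup_of_rank_add (n : ℕ) (hn : 1 ≤ n)
    (z : FreeGroup (Fin n)) (hz : z ≠ 1) (l : ℕ) :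
    Function.Injective
      (FreeGroup.lift (fun x : Fin n ⊕ Fin l =>
        match x with
        | Sum.inl i => FreeGroup.of (some i)
        | Sum.inr j =>
            FreeGroup.of (none : Option (Fin n)) ^ ((j : ℤ) + 1) *
              FreeGroup.map (fun i : Fin n => (some i : Option (Fin n))) z *
              FreeGroup.of (none : Option (Fin n)) ^ (-((j : ℤ) + 1))) :
        FreeGroup (Fin n ⊕ Fin l) →* FreeGroup (Option (Fin n))) := by
  have : Nonempty (Fin n) := ⟨⟨0, hn⟩⟩
  let e : Fin n ⊕ Fin l → Σ k, FreeGroup.ConjBlock (Fin n) k :=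
    Sum.elim (fun i => ⟨0, i⟩) fun j => ⟨j + 1, PUnit.unit⟩
  have he : Injective e := by
    rintro (i | i) (j | j) h <;> obtain ⟨h₁, h₂⟩ := Sigma.mk.inj_iff.1 h
    · exact congrArg Sum.inl (eq_of_heq h₂)
    · omega
    · omega
    · exact congrArg Sum.inr (Fin.ext (by omega))
  convert (FreeGroup.injective_lift_conjFamily hz).comp (FreeGroup.map_injective he) using 1
  rw [← MonoidHom.coe_comp, DFunLike.coe_fn_eq]
  ext (i | j)
  · rfl
  · simp [e, FreeGroup.conjFamily]
    group
end

section
/- Let k, r be natural numbers and let X, Y be k × k matrices over ℂ such that the number of indices i for which the i-th row of Y is nonzero is at most r. Then the determinant of the matrix X + t·Y over the polynomial ring ℂ[t] (i.e., of the matrix whose (i,j) entry is the polynomial X i j + t · Y i j) is a polynomial of degree at most r. -/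
open Polynomial

/-! Expanding the determinant over permutations, every term is a product taking exactly one
entry from each row. An entry in a row where `Y` vanishes is a constant, any other entry has
degree at most one, so each term has degree at most the number of nonzero rows of `Y`. -/

theorem Set.ncard_setOf_eq_sum_boole {ι : Type*} [Fintype ι] (p : ι → Prop) [DecidablePred p] :
    {i | p i}.ncard = ∑ i, if p i then 1 else 0 := by
  rw [Finset.sum_boole, Nat.cast_id, ← Set.ncard_coe_finset, Finset.coe_filter_univ]

namespace Polynomial

theorem degree_det_le_sum_of_degree_row_le {n R : Type*} [Fintype n] [DecidableEq n]
    [CommRing R] (M : Matrix n n R[X]) (d : n → ℕ) (hM : ∀ i j, (M i j).degree ≤ d i) :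
    M.det.degree ≤ ((∑ i, d i : ℕ) : WithBot ℕ) := by
  rw [Matrix.det_apply]
  refine (degree_sum_le _ _).trans (Finset.sup_le fun σ _ => ?_)
  rw [Units.smul_def]
  calc (((Equiv.Perm.sign σ : ℤ) • ∏ i, M (σ i) i)).degree
      ≤ (∏ i, M (σ i) i).degree := degree_smul_le _ _
    _ ≤ ∑ i, (M (σ i) i).degree := degree_prod_le _ _
    _ ≤ ∑ i, ((d (σ i) : ℕ) : WithBot ℕ) := Finset.sum_le_sum fun i _ => hM _ _
    _ = ((∑ i, d i : ℕ) : WithBot ℕ) := by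
      rw [Equiv.sum_comp σ (fun i => (d i : WithBot ℕ)), Nat.cast_sum]

theorem degree_C_add_X_mul_C_le {R : Type*} [Semiring R] (a b : R) :
    (C a + X * C b).degree ≤ 1 := by
  rw [X_mul_C, add_comm]
  exact degree_linear_le

end Polynomial

/-- if `X, Y` are `k × k` complex matrices and at most `r` rows of `Y` are
nonzero, then `det (X + t·Y)`, a polynomial in `t`, has degree at most `r`. -/
theorem det_add_X_smul_degree_le (k r : ℕ) (X Y : Matrix (Fin k) (Fin k) ℂ)
    (hY : {i : Fin k | Y i ≠ 0}.ncard ≤ r) :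
    (Matrix.det (fun i j => C (X i j) + Polynomial.X * C (Y i j))).degree ≤ (r : WithBot ℕ) := by
  classical
  rw [Set.ncard_setOf_eq_sum_boole] at hY
  refine (degree_det_le_sum_of_degree_row_le _ (fun i => if Y i ≠ 0 then 1 else 0)
    fun i j => ?_).trans (by exact_mod_cast hY)
  by_cases hi : Y i = 0
  · simpa [hi] using degree_C_le
  · simpa [hi] using degree_C_add_X_mul_C_le (X i j) (Y i j)
end
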